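/- arXiv:2511.02654 — 2 statements merged into one kernel-verified Lean document; each statement's English description precedes it below -/
import Mathlib

section
/- Existence and uniqueness for a single implicit time step: Let δt > 0 with δt < 1/(2M) and let (p⁻, q⁻) ∈ K_D × X. Then there exists a unique pair (p, q) ∈ K_D × X which is a one-step solution of the gradient scheme from (p⁻, q⁻) with step δt. -/
open MeasureTheory RealInnerProductSpace

noncomputable section

/-- Euclidean space `ℝ^d`. -/
abbrev Euc (d : ℕ) : Type := EuclideanSpace ℝ (Fin d)

/-- The discrete convex set `K_D = {φ ∈ X : Πφ ≥ χ_D a.e. in Ω}`. -/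
def KD {α : Type} [MeasurableSpace α] (μ : Measure α)
    {X : Type} [AddCommGroup X] [Module ℝ X]
    (Pi : X →ₗ[ℝ] Lp ℝ 2 μ) (χD : Lp ℝ 2 μ) : Set X :=
  {φ : X | ∀ᵐ x ∂μ, χD x ≤ Pi φ x}

/-- `(p, q)` is a one-step solution of the gradient scheme from `(pm, qm)` with step `δt`:
`p` belongs to `K_D` and the discrete variational inequality and equality hold. -/
def IsOneStepSol {α : Type} [MeasurableSpace α] (μ : Measure α)
    {V : Type} [NormedAddCommGroup V] [InnerProductSpace ℝ V]
    {X : Type} [AddCommGroup X] [Module ℝ X]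
    (Pi : X →ₗ[ℝ] Lp ℝ 2 μ) (G : X →ₗ[ℝ] Lp V 2 μ) (χD : Lp ℝ 2 μ)
    (A B : α → V →ₗ[ℝ] V) (f g : ℝ → ℝ → ℝ)
    (δt : ℝ) (pm qm p q : X) : Prop :=
  p ∈ KD μ Pi χD ∧
  (∀ φ ∈ KD μ Pi χD,
    (∫ x, δt⁻¹ * (Pi p x - Pi pm x) * (Pi p x - Pi φ x) ∂μ)
      + (∫ x, ⟪A x (G p x), G p x - G φ x⟫ ∂μ)
      ≤ ∫ x, f (Pi p x) (Pi q x) * (Pi p x - Pi φ x) ∂μ) ∧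
  (∀ ψ : X,
    (∫ x, δt⁻¹ * (Pi q x - Pi qm x) * (Pi ψ x) ∂μ)
      + (∫ x, ⟪B x (G q x), G ψ x⟫ ∂μ)
      = ∫ x, g (Pi p x) (Pi q x) * (Pi ψ x) ∂μ)

set_option linter.unusedSectionVars false

lemma vi_exists_unique {X E : Type} [AddCommGroup X] [Module ℝ X] [FiniteDimensional ℝ X]
    [NormedAddCommGroup E] [NormedSpace ℝ E] (P : X →ₗ[ℝ] E) (C : Set E)
    (hCc : IsClosed C) (hCv : Convex ℝ C) (hne : (P ⁻¹' C).Nonempty)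
    (a : X → X → ℝ)
    (hadd : ∀ x y z, a (x + y) z = a x z + a y z)
    (hsmulA : ∀ (r : ℝ) (x y : X), a (r • x) y = r * a x y)
    (hsym : ∀ x y, a x y = a y x)
    (hpos : ∀ x, 0 ≤ a x x) (hdef : ∀ x, a x x = 0 → x = 0)
    (L : X → ℝ) (hLadd : ∀ x y, L (x + y) = L x + L y)
    (hLsmul : ∀ (r : ℝ) (x : X), L (r • x) = r * L x) :
    ∃! p, p ∈ P ⁻¹' C ∧ ∀ φ ∈ P ⁻¹' C, a p (p - φ) ≤ L (p - φ) := by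
  letI core : InnerProductSpace.Core ℝ X :=
    { inner := fun x y => a x y
      conj_inner_symm := fun x y => by simpa using hsym y x
      re_inner_nonneg := fun x => by simpa using hpos x
      add_left := fun x y z => by simpa using hadd x y z
      smul_left := fun x y r => by simpa using hsmulA r x y
      definite := hdef }
  letI : NormedAddCommGroup X := core.toNormedAddCommGroup
  letI : InnerProductSpace ℝ X := InnerProductSpace.ofCore core.toCore
  have hinner : ∀ x y : X, ⟪x, y⟫ = a x y := fun x y => rfl
  set K : Set X := P ⁻¹' C with hK
  have hKc : IsClosed K := hCc.preimage P.continuous_of_finiteDimensional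
  have hKv : Convex ℝ K := hCv.linear_preimage P
  set Llin : X →ₗ[ℝ] ℝ :=
    { toFun := L, map_add' := hLadd, map_smul' := fun r x => by simpa using hLsmul r x }
  set w : X := (InnerProductSpace.toDual ℝ X).symm Llin.toContinuousLinearMap with hw
  have hwL : ∀ y : X, ⟪w, y⟫ = L y := fun y =>
    InnerProductSpace.toDual_symm_apply
  have hchar : ∀ p : X, p ∈ K →
      ((∀ φ ∈ K, a p (p - φ) ≤ L (p - φ)) ↔ ∀ φ ∈ K, ⟪w - p, φ - p⟫ ≤ 0) := by
    intro p hp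
    have hswap : ∀ x φ : X, ⟪x, φ - p⟫ = -⟪x, p - φ⟫ := fun x φ => by
      rw [← inner_neg_right, neg_sub]
    constructor
    · intro h φ hφ
      have h1 : ⟪p, p - φ⟫ ≤ ⟪w, p - φ⟫ := by rw [hinner, hwL]; exact h φ hφ
      have h2 : ⟪w - p, φ - p⟫ = -⟪w, p - φ⟫ + ⟪p, p - φ⟫ := by
        rw [inner_sub_left, hswap, hswap]; ring
      rw [h2]; linarith
    · intro h φ hφ
      have h0 := h φ hφ
      rw [inner_sub_left, hswap, hswap] at h0
      rw [← hinner, ← hwL]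
      linarith
  obtain ⟨p, hpK, hpmin⟩ := exists_norm_eq_iInf_of_complete_convex hne hKc.isComplete hKv w
  have hpVI : ∀ φ ∈ K, ⟪w - p, φ - p⟫ ≤ 0 :=
    (norm_eq_iInf_iff_real_inner_le_zero hKv hpK).1 hpmin
  refine ⟨p, ⟨hpK, (hchar p hpK).2 hpVI⟩, ?_⟩
  rintro p' ⟨hp'K, hp'⟩
  have e1 : ⟪w - p', p - p'⟫ ≤ 0 := (hchar p' hp'K).1 hp' p hpK
  have e2 : ⟪w - p, p' - p⟫ ≤ 0 := hpVI p' hp'K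
  have e2' : 0 ≤ ⟪w - p, p - p'⟫ := by
    rw [show ⟪w - p, p - p'⟫ = -⟪w - p, p' - p⟫ from by rw [← inner_neg_right, neg_sub]]
    linarith
  have key : ⟪p - p', p - p'⟫ ≤ 0 := by
    have h3 : ⟪p - p', p - p'⟫ = ⟪w - p', p - p'⟫ - ⟪w - p, p - p'⟫ := by
      rw [← inner_sub_left]; congr 1; abel
    rw [h3]; linarith
  have hz : ⟪p - p', p - p'⟫ = (0 : ℝ) := le_antisymm key real_inner_self_nonneg
  have : p - p' = 0 := inner_self_eq_zero.mp hz
  exact (sub_eq_zero.mp this).symm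


variable {V : Type} [NormedAddCommGroup V] [InnerProductSpace ℝ V]

/-- Cauchy–Schwarz style bound for a symmetric positive operator. -/
lemma psd_op_bound (T : V →ₗ[ℝ] V) (d₂ : ℝ)
    (hsym : ∀ ξ η, ⟪T ξ, η⟫ = ⟪ξ, T η⟫)
    (hell : ∀ ξ, 0 ≤ ⟪ξ, T ξ⟫ ∧ ⟪ξ, T ξ⟫ ≤ d₂ * ‖ξ‖ ^ 2) :
    ∀ ξ η, |⟪T ξ, η⟫| ≤ d₂ * (‖ξ‖ * ‖η‖) := by
  intro ξ η
  have hq : ∀ t : ℝ, 0 ≤ ⟪η, T η⟫ * (t * t) + (2 * ⟪ξ, T η⟫) * t + ⟪ξ, T ξ⟫ := by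
    intro t
    have h0 := (hell (ξ + t • η)).1
    have hexp : ⟪ξ + t • η, T (ξ + t • η)⟫
        = ⟪ξ, T ξ⟫ + t * ⟪ξ, T η⟫ + t * ⟪η, T ξ⟫ + t * t * ⟪η, T η⟫ := by
      simp [map_add, _root_.map_smul, inner_add_left, inner_add_right,
        real_inner_smul_left, real_inner_smul_right]
      ring
    have hs : ⟪η, T ξ⟫ = ⟪ξ, T η⟫ := by rw [← hsym ξ η, real_inner_comm]
    rw [hexp, hs] at h0
    nlinarith [h0]
  have hdisc := discrim_le_zero hq
  rw [discrim] at hdisc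
  have hcs : ⟪ξ, T η⟫ ^ 2 ≤ ⟪ξ, T ξ⟫ * ⟪η, T η⟫ := by nlinarith [hdisc]
  have h1 := (hell ξ).2
  have h2 := (hell η).2
  have h1' := (hell ξ).1
  have h2' := (hell η).1
  rcases eq_or_ne ξ 0 with rfl | hξ0
  · simp
  rcases eq_or_ne η 0 with rfl | hη0
  · simp
  have hξp : 0 < ‖ξ‖ := norm_pos_iff.2 hξ0
  have hηp : 0 < ‖η‖ := norm_pos_iff.2 hη0
  have hd2 : 0 ≤ d₂ := by nlinarith [pow_pos hξp 2]
  have hb : ⟪ξ, T η⟫ ^ 2 ≤ (d₂ * (‖ξ‖ * ‖η‖)) ^ 2 := by nlinarith [hcs]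
  have habs : |⟪ξ, T η⟫| ≤ d₂ * (‖ξ‖ * ‖η‖) := by
    have hnn : 0 ≤ d₂ * (‖ξ‖ * ‖η‖) := by positivity
    rcases abs_cases (⟪ξ, T η⟫ : ℝ) with ⟨he, _⟩ | ⟨he, _⟩ <;> nlinarith
  rw [hsym]; exact habs

/-- Real `L²` inner product is the integral of the product. -/
lemma L2_inner_mul {α : Type} [MeasurableSpace α] {μ : Measure α} (u w : Lp ℝ 2 μ) :
    ⟪u, w⟫ = ∫ x, u x * w x ∂μ := by
  rw [L2.inner_def]
  congr 1
  funext x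
  exact Real.inner_apply _ _
variable {dim : ℕ} {α : Type} [MeasurableSpace α] {μ : Measure α}

/-- Applying a measurable family of operators to a strongly measurable function. -/
lemma opApply_aesm (A : α → Euc dim →ₗ[ℝ] Euc dim)
    (hA : ∀ ξ, Measurable fun x => A x ξ) {u : α → Euc dim}
    (hu : AEStronglyMeasurable u μ) :
    AEStronglyMeasurable (fun x => A x (u x)) μ := by
  obtain ⟨u', hu', heq⟩ := hu
  refine ⟨fun x => A x (u' x), ?_, ?_⟩
  · have hmeas : Measurable fun x => A x (u' x) := by
      have hrepr : ∀ x, A x (u' x) =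
          ∑ i : Fin dim, (u' x i) • A x (EuclideanSpace.single i 1) := by
        intro x
        have h0 : u' x = ∑ i : Fin dim, (u' x i) • EuclideanSpace.single i (1 : ℝ) := by
          ext j
          rw [WithLp.ofLp_sum, Finset.sum_apply]
          simp [EuclideanSpace.single_apply]
        conv_lhs => rw [h0]
        rw [map_sum]
        simp [_root_.map_smul]
      simp_rw [hrepr]
      refine Finset.measurable_sum _ fun i _ => Measurable.smul (f := fun x => u' x i) ?_ (hA _)
      exact ((EuclideanSpace.proj (𝕜 := ℝ) i).continuous.measurable).comp hu'.measurable
    exact hmeas.stronglyMeasurable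
  · filter_upwards [heq] with x hx
    rw [hx]

/-- Integrability of the operator-weighted inner product of two L² functions. -/
lemma opInner_integrable (A : α → Euc dim →ₗ[ℝ] Euc dim)
    (hA : ∀ ξ, Measurable fun x => A x ξ) (d₂ : ℝ)
    (hbd : ∀ᵐ x ∂μ, ∀ ξ η, |⟪A x ξ, η⟫| ≤ d₂ * (‖ξ‖ * ‖η‖))
    (u w : Lp (Euc dim) 2 μ) :
    Integrable (fun x => ⟪A x (u x), w x⟫) μ := by
  have hsm : AEStronglyMeasurable (fun x => ⟪A x (u x), w x⟫) μ :=
    (opApply_aesm A hA (Lp.aestronglyMeasurable u)).inner (Lp.aestronglyMeasurable w)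
  have hnu := (Lp.memLp u).norm
  have hnw := (Lp.memLp w).norm
  have hint : Integrable (fun x => ‖u x‖ * ‖w x‖) μ := by
    have h := L2.integrable_inner (𝕜 := ℝ) (hnu.toLp _) (hnw.toLp _)
    refine (integrable_congr ?_).1 h
    filter_upwards [hnu.coeFn_toLp, hnw.coeFn_toLp] with x h1 h2
    rw [h1, h2]
    exact Real.inner_apply _ _
  refine Integrable.mono' (hint.const_mul d₂) hsm ?_
  filter_upwards [hbd] with x hx
  calc ‖⟪A x (u x), w x⟫‖ = |⟪A x (u x), w x⟫| := rfl
    _ ≤ d₂ * (‖u x‖ * ‖w x‖) := hx _ _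
variable {α : Type} [MeasurableSpace α] {μ : Measure α}

lemma lip_continuous (f : ℝ → ℝ → ℝ) (M : ℝ)
    (hf : ∀ a b a' b', |f a b - f a' b'| ≤ M * (|a - a'| + |b - b'|)) :
    Continuous fun p : ℝ × ℝ => f p.1 p.2 := by
  have hM0 : 0 ≤ M := by
    have h := hf 1 0 0 0
    simp at h
    linarith [abs_nonneg (f 1 0 - f 0 0)]
  refine (LipschitzWith.of_dist_le_mul (K := (2 * M).toNNReal) ?_).continuous
  intro p q
  rw [Real.coe_toNNReal _ (by linarith)]
  have h1 : dist (f p.1 p.2) (f q.1 q.2) = |f p.1 p.2 - f q.1 q.2| := Real.dist_eq _ _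
  rw [h1]
  have h2 := hf p.1 p.2 q.1 q.2
  have h3 : |p.1 - q.1| ≤ dist p q := by
    rw [← Real.dist_eq]; exact le_max_left _ _
  have h4 : |p.2 - q.2| ≤ dist p q := by
    rw [← Real.dist_eq]; exact le_max_right _ _
  nlinarith [dist_nonneg (x := p) (y := q)]

lemma lipComp_memLp [IsFiniteMeasure μ] (f : ℝ → ℝ → ℝ) (M : ℝ)
    (hf : ∀ a b a' b', |f a b - f a' b'| ≤ M * (|a - a'| + |b - b'|))
    (u v : Lp ℝ 2 μ) :
    MemLp (fun x => f (u x) (v x)) 2 μ := by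
  have hM0 : 0 ≤ M := by
    have h := hf 1 0 0 0
    simp at h
    linarith [abs_nonneg (f 1 0 - f 0 0)]
  have hsm : AEStronglyMeasurable (fun x => f (u x) (v x)) μ :=
    (lip_continuous f M hf).comp_aestronglyMeasurable
      ((Lp.aestronglyMeasurable u).prodMk (Lp.aestronglyMeasurable v))
  have hg : MemLp (fun x => |f 0 0| + (M * |u x| + M * |v x|)) 2 μ :=
    (memLp_const (|f 0 0|)).add (((Lp.memLp u).abs.const_mul M).add ((Lp.memLp v).abs.const_mul M))
  refine MemLp.of_le hg hsm ?_
  filter_upwards with x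
  have h1 : |f (u x) (v x) - f 0 0| ≤ M * (|u x - 0| + |v x - 0|) := hf _ _ _ _
  simp only [sub_zero] at h1
  have h2 : |f (u x) (v x)| ≤ |f 0 0| + (M * |u x| + M * |v x|) := by
    have := abs_sub_abs_le_abs_sub (f (u x) (v x)) (f 0 0)
    nlinarith
  calc ‖f (u x) (v x)‖ = |f (u x) (v x)| := rfl
    _ ≤ |f 0 0| + (M * |u x| + M * |v x|) := h2
    _ ≤ ‖|f 0 0| + (M * |u x| + M * |v x|)‖ := le_abs_self _

lemma lipComp_dist_le [IsFiniteMeasure μ] (f : ℝ → ℝ → ℝ) (M : ℝ)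
    (hf : ∀ a b a' b', |f a b - f a' b'| ≤ M * (|a - a'| + |b - b'|))
    (u₁ v₁ u₂ v₂ : Lp ℝ 2 μ)
    (h₁ : MemLp (fun x => f (u₁ x) (v₁ x)) 2 μ)
    (h₂ : MemLp (fun x => f (u₂ x) (v₂ x)) 2 μ) :
    ‖h₁.toLp _ - h₂.toLp _‖ ≤ M * (‖u₁ - u₂‖ + ‖v₁ - v₂‖) := by
  have hM0 : 0 ≤ M := by
    have h := hf 1 0 0 0
    simp at h
    linarith [abs_nonneg (f 1 0 - f 0 0)]
  have hDE : |h₁.toLp _ - h₂.toLp _| ≤ M • (|u₁ - u₂| + |v₁ - v₂|) := by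
    rw [← Lp.coeFn_le]
    filter_upwards [Lp.coeFn_abs (h₁.toLp _ - h₂.toLp _), Lp.coeFn_sub (h₁.toLp _) (h₂.toLp _),
      h₁.coeFn_toLp, h₂.coeFn_toLp, Lp.coeFn_smul (M : ℝ) (|u₁ - u₂| + |v₁ - v₂|),
      Lp.coeFn_add (|u₁ - u₂|) (|v₁ - v₂|), Lp.coeFn_abs (u₁ - u₂), Lp.coeFn_abs (v₁ - v₂),
      Lp.coeFn_sub u₁ u₂, Lp.coeFn_sub v₁ v₂] with x e1 e2 e3 e4 e5 e6 e7 e8 e9 e10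
    rw [e1, e2, e5]
    simp only [Pi.sub_apply, Pi.smul_apply, smul_eq_mul]
    rw [e3, e4, e6]
    simp only [Pi.add_apply]
    rw [e7, e8, e9, e10]
    simp only [Pi.sub_apply]
    exact (hf _ _ _ _).trans (le_of_eq (by ring))
  have hsolid : ‖h₁.toLp _ - h₂.toLp _‖ ≤ ‖M • (|u₁ - u₂| + |v₁ - v₂| : Lp ℝ 2 μ)‖ :=
    HasSolidNorm.solid (hDE.trans (le_abs_self _))
  calc ‖h₁.toLp _ - h₂.toLp _‖ ≤ ‖M • (|u₁ - u₂| + |v₁ - v₂| : Lp ℝ 2 μ)‖ := hsolid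
    _ = |M| * ‖(|u₁ - u₂| + |v₁ - v₂| : Lp ℝ 2 μ)‖ := by rw [norm_smul]; rfl
    _ ≤ |M| * (‖(|u₁ - u₂| : Lp ℝ 2 μ)‖ + ‖(|v₁ - v₂| : Lp ℝ 2 μ)‖) :=
        mul_le_mul_of_nonneg_left (norm_add_le _ _) (abs_nonneg M)
    _ = M * (‖u₁ - u₂‖ + ‖v₁ - v₂‖) := by
        rw [norm_abs_eq_norm, norm_abs_eq_norm, abs_of_nonneg hM0]

section FormLemmas

variable {dim : ℕ} {X : Type} [AddCommGroup X] [Module ℝ X]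

/-- The bilinear form of the implicit scheme. -/
def formA (P : X →ₗ[ℝ] Lp ℝ 2 μ) (G : X →ₗ[ℝ] Lp (Euc dim) 2 μ)
    (A : α → Euc dim →ₗ[ℝ] Euc dim) (δt : ℝ) (p w : X) : ℝ :=
  δt⁻¹ * ⟪P p, P w⟫ + ∫ x, ⟪A x (G p x), G w x⟫ ∂μ

/-- The affine functional of the implicit scheme. -/
def funcL (P : X →ₗ[ℝ] Lp ℝ 2 μ) (δt : ℝ) (pm : X) (h : Lp ℝ 2 μ) (w : X) : ℝ :=
  δt⁻¹ * ⟪P pm, P w⟫ + ⟪h, P w⟫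

variable (P : X →ₗ[ℝ] Lp ℝ 2 μ) (G : X →ₗ[ℝ] Lp (Euc dim) 2 μ)
  {A : α → Euc dim →ₗ[ℝ] Euc dim} {d₂ : ℝ} (δt : ℝ)

lemma funcL_add (pm : X) (h : Lp ℝ 2 μ) (x y : X) :
    funcL P δt pm h (x + y) = funcL P δt pm h x + funcL P δt pm h y := by
  simp only [funcL, map_add, inner_add_right]; ring

lemma funcL_smul (pm : X) (h : Lp ℝ 2 μ) (r : ℝ) (x : X) :
    funcL P δt pm h (r • x) = r * funcL P δt pm h x := by
  simp only [funcL, _root_.map_smul, real_inner_smul_right]; ring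

lemma funcL_sub (pm : X) (h : Lp ℝ 2 μ) (x y : X) :
    funcL P δt pm h (x - y) = funcL P δt pm h x - funcL P δt pm h y := by
  have := funcL_add P δt pm h (x - y) y
  simp only [sub_add_cancel] at this
  linarith

lemma formA_int (hAmeas : ∀ ξ, Measurable fun x => A x ξ)
    (hbd : ∀ᵐ x ∂μ, ∀ ξ η, |⟪A x ξ, η⟫| ≤ d₂ * (‖ξ‖ * ‖η‖)) (p w : X) :
    Integrable (fun x => ⟪A x (G p x), G w x⟫) μ :=
  opInner_integrable A hAmeas d₂ hbd (G p) (G w)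

lemma formA_add_left (hAmeas : ∀ ξ, Measurable fun x => A x ξ)
    (hbd : ∀ᵐ x ∂μ, ∀ ξ η, |⟪A x ξ, η⟫| ≤ d₂ * (‖ξ‖ * ‖η‖)) (p p' w : X) :
    formA P G A δt (p + p') w = formA P G A δt p w + formA P G A δt p' w := by
  simp only [formA, map_add, inner_add_left]
  have hcongr : (fun x => ⟪A x ((G p + G p') x), G w x⟫)
      =ᵐ[μ] fun x => ⟪A x (G p x), G w x⟫ + ⟪A x (G p' x), G w x⟫ := by
    filter_upwards [Lp.coeFn_add (G p) (G p')] with x e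
    rw [e]
    simp [inner_add_left]
  rw [integral_congr_ae hcongr,
    integral_add (formA_int G hAmeas hbd p w) (formA_int G hAmeas hbd p' w)]
  ring

lemma formA_smul_left (r : ℝ) (p w : X) :
    formA P G A δt (r • p) w = r * formA P G A δt p w := by
  simp only [formA, _root_.map_smul, real_inner_smul_left]
  have hcongr : (fun x => ⟪A x ((r • G p) x), G w x⟫)
      =ᵐ[μ] fun x => r * ⟪A x (G p x), G w x⟫ := by
    filter_upwards [Lp.coeFn_smul r (G p)] with x e
    rw [e]
    simp only [Pi.smul_apply, _root_.map_smul, real_inner_smul_left]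
  rw [integral_congr_ae hcongr, integral_const_mul]
  ring

lemma formA_symm (hAsym : ∀ᵐ x ∂μ, ∀ ξ η, ⟪A x ξ, η⟫ = ⟪ξ, A x η⟫) (p w : X) :
    formA P G A δt p w = formA P G A δt w p := by
  simp only [formA]
  rw [real_inner_comm (P p) (P w)]
  congr 1
  apply integral_congr_ae
  filter_upwards [hAsym] with x hx
  rw [hx, real_inner_comm]

lemma formA_self_lower {d₁ : ℝ} (hAmeas : ∀ ξ, Measurable fun x => A x ξ)
    (hbd : ∀ᵐ x ∂μ, ∀ ξ η, |⟪A x ξ, η⟫| ≤ d₂ * (‖ξ‖ * ‖η‖))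
    (hAell : ∀ᵐ x ∂μ, ∀ ξ, d₁ * ‖ξ‖ ^ 2 ≤ ⟪ξ, A x ξ⟫ ∧ ⟪ξ, A x ξ⟫ ≤ d₂ * ‖ξ‖ ^ 2) (p : X) :
    d₁ * ‖G p‖ ^ 2 ≤ ∫ x, ⟪A x (G p x), G p x⟫ ∂μ := by
  have hint2 : Integrable (fun x => ‖G p x‖ ^ 2) μ := by
    have h := L2.integrable_inner (𝕜 := ℝ) (G p) (G p)
    refine (integrable_congr ?_).1 h
    filter_upwards with x
    rw [real_inner_self_eq_norm_sq]
  have hmono : ∫ x, d₁ * ‖G p x‖ ^ 2 ∂μ ≤ ∫ x, ⟪A x (G p x), G p x⟫ ∂μ := by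
    refine integral_mono_ae (hint2.const_mul d₁) (formA_int G hAmeas hbd p p) ?_
    filter_upwards [hAell] with x hx
    calc d₁ * ‖G p x‖ ^ 2 ≤ ⟪G p x, A x (G p x)⟫ := (hx _).1
      _ = ⟪A x (G p x), G p x⟫ := real_inner_comm _ _
  have hnorm : ∫ x, ‖G p x‖ ^ 2 ∂μ = ‖G p‖ ^ 2 := by
    have h1 : ⟪G p, G p⟫ = ∫ x, ⟪G p x, G p x⟫ ∂μ := L2.inner_def (𝕜 := ℝ) _ _
    have h2 : ∫ x, ⟪G p x, G p x⟫ ∂μ = ∫ x, ‖G p x‖ ^ 2 ∂μ := by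
      apply integral_congr_ae
      filter_upwards with x
      rw [real_inner_self_eq_norm_sq]
    rw [← h2, ← h1, real_inner_self_eq_norm_sq]
  rw [integral_const_mul, hnorm] at hmono
  exact hmono

end FormLemmas

section Solver

variable {dim : ℕ} {α : Type} [MeasurableSpace α] {μ : Measure α}
  {X : Type} [AddCommGroup X] [Module ℝ X] [FiniteDimensional ℝ X]
  (P : X →ₗ[ℝ] Lp ℝ 2 μ) (G : X →ₗ[ℝ] Lp (Euc dim) 2 μ)
  {A : α → Euc dim →ₗ[ℝ] Euc dim} {d₁ d₂ : ℝ} {δt : ℝ}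

lemma formA_sub_left (hAmeas : ∀ ξ, Measurable fun x => A x ξ)
    (hbd : ∀ᵐ x ∂μ, ∀ ξ η, |⟪A x ξ, η⟫| ≤ d₂ * (‖ξ‖ * ‖η‖)) (p p' w : X) :
    formA P G A δt (p - p') w = formA P G A δt p w - formA P G A δt p' w := by
  have h := formA_add_left P G δt hAmeas hbd (p - p') p' w
  rw [sub_add_cancel] at h
  linarith

lemma formA_neg_right (hAsym : ∀ᵐ x ∂μ, ∀ ξ η, ⟪A x ξ, η⟫ = ⟪ξ, A x η⟫) (x y : X) :
    formA P G A δt x (-y) = - formA P G A δt x y := by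
  rw [formA_symm P G δt hAsym, show (-y : X) = (-1 : ℝ) • y by simp,
    formA_smul_left, formA_symm P G δt hAsym]
  ring

lemma funcL_neg (pm : X) (h : Lp ℝ 2 μ) (y : X) :
    funcL P δt pm h (-y) = - funcL P δt pm h y := by
  rw [show (-y : X) = (-1 : ℝ) • y by simp, funcL_smul]
  ring

lemma formA_self_pos (hGnorm : ∀ φ : X, G φ = 0 → φ = 0)
    (hAmeas : ∀ ξ, Measurable fun x => A x ξ)
    (hbd : ∀ᵐ x ∂μ, ∀ ξ η, |⟪A x ξ, η⟫| ≤ d₂ * (‖ξ‖ * ‖η‖))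
    (hAell : ∀ᵐ x ∂μ, ∀ ξ, d₁ * ‖ξ‖ ^ 2 ≤ ⟪ξ, A x ξ⟫ ∧ ⟪ξ, A x ξ⟫ ≤ d₂ * ‖ξ‖ ^ 2)
    (hd₁ : 0 < d₁) (hδt : 0 < δt) (p : X) :
    (0 ≤ formA P G A δt p p) ∧ (formA P G A δt p p = 0 → p = 0) := by
  have hlow := formA_self_lower G hAmeas hbd hAell p
  have hip : (0:ℝ) ≤ δt⁻¹ * ⟪P p, P p⟫ := by
    have := real_inner_self_nonneg (x := P p)
    have hi : (0:ℝ) ≤ δt⁻¹ := by positivity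
    positivity
  have hG : (0:ℝ) ≤ d₁ * ‖G p‖ ^ 2 := by positivity
  constructor
  · simp only [formA]
    linarith
  · intro h0
    simp only [formA] at h0
    have hGz : ‖G p‖ ^ 2 ≤ 0 := by nlinarith
    have : ‖G p‖ = 0 := by nlinarith [norm_nonneg (G p), sq_nonneg ‖G p‖]
    exact hGnorm p (norm_eq_zero.mp this)

/-- Existence and uniqueness for the discretised variational inequality. -/
lemma scheme_solver (hGnorm : ∀ φ : X, G φ = 0 → φ = 0)
    (hAmeas : ∀ ξ, Measurable fun x => A x ξ)
    (hbd : ∀ᵐ x ∂μ, ∀ ξ η, |⟪A x ξ, η⟫| ≤ d₂ * (‖ξ‖ * ‖η‖))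
    (hAsym : ∀ᵐ x ∂μ, ∀ ξ η, ⟪A x ξ, η⟫ = ⟪ξ, A x η⟫)
    (hAell : ∀ᵐ x ∂μ, ∀ ξ, d₁ * ‖ξ‖ ^ 2 ≤ ⟪ξ, A x ξ⟫ ∧ ⟪ξ, A x ξ⟫ ≤ d₂ * ‖ξ‖ ^ 2)
    (hd₁ : 0 < d₁) (hδt : 0 < δt)
    (C : Set (Lp ℝ 2 μ)) (hCc : IsClosed C) (hCv : Convex ℝ C)
    (hne : (P ⁻¹' C).Nonempty) (pm : X) (h : Lp ℝ 2 μ) :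
    ∃! p, p ∈ P ⁻¹' C ∧ ∀ φ ∈ P ⁻¹' C,
      formA P G A δt p (p - φ) ≤ funcL P δt pm h (p - φ) :=
  vi_exists_unique P C hCc hCv hne (formA P G A δt)
    (formA_add_left P G δt hAmeas hbd) (formA_smul_left P G δt)
    (formA_symm P G δt hAsym)
    (fun p => (formA_self_pos P G hGnorm hAmeas hbd hAell hd₁ hδt p).1)
    (fun p => (formA_self_pos P G hGnorm hAmeas hbd hAell hd₁ hδt p).2)
    (funcL P δt pm h) (funcL_add P δt pm h) (funcL_smul P δt pm h)

/-- Contraction estimate: the solution depends Lipschitz-continuously on the data. -/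
lemma scheme_contraction (hAmeas : ∀ ξ, Measurable fun x => A x ξ)
    (hbd : ∀ᵐ x ∂μ, ∀ ξ η, |⟪A x ξ, η⟫| ≤ d₂ * (‖ξ‖ * ‖η‖))
    (hAsym : ∀ᵐ x ∂μ, ∀ ξ η, ⟪A x ξ, η⟫ = ⟪ξ, A x η⟫)
    (hAell : ∀ᵐ x ∂μ, ∀ ξ, d₁ * ‖ξ‖ ^ 2 ≤ ⟪ξ, A x ξ⟫ ∧ ⟪ξ, A x ξ⟫ ≤ d₂ * ‖ξ‖ ^ 2)
    (hd₁ : 0 < d₁) (hδt : 0 < δt)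
    (C : Set (Lp ℝ 2 μ)) (pm : X) (h h' : Lp ℝ 2 μ) (p p' : X)
    (hpK : p ∈ P ⁻¹' C)
    (hp : ∀ φ ∈ P ⁻¹' C, formA P G A δt p (p - φ) ≤ funcL P δt pm h (p - φ))
    (hp'K : p' ∈ P ⁻¹' C)
    (hp' : ∀ φ ∈ P ⁻¹' C, formA P G A δt p' (p' - φ) ≤ funcL P δt pm h' (p' - φ)) :
    ‖P p - P p'‖ ≤ δt * ‖h - h'‖ := by
  set e : X := p - p' with he
  have h1 : formA P G A δt p e ≤ funcL P δt pm h e := hp p' hp'K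
  have h2 : formA P G A δt p' (p' - p) ≤ funcL P δt pm h' (p' - p) := hp' p hpK
  have hneg : p' - p = -e := by rw [he, neg_sub]
  rw [hneg, formA_neg_right P G hAsym, funcL_neg] at h2
  have h3 : formA P G A δt e e ≤ funcL P δt pm h e - funcL P δt pm h' e := by
    rw [formA_sub_left P G hAmeas hbd]
    linarith
  have h4 : funcL P δt pm h e - funcL P δt pm h' e = ⟪h - h', P e⟫ := by
    simp only [funcL, inner_sub_left]
    ring
  have h5 : δt⁻¹ * ‖P e‖ ^ 2 ≤ formA P G A δt e e := by
    have hlow := formA_self_lower G hAmeas hbd hAell e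
    have hG : (0:ℝ) ≤ d₁ * ‖G e‖ ^ 2 := by positivity
    simp only [formA, real_inner_self_eq_norm_sq]
    linarith
  have h6 : ⟪h - h', P e⟫ ≤ ‖h - h'‖ * ‖P e‖ := real_inner_le_norm _ _
  have key : δt⁻¹ * ‖P e‖ ^ 2 ≤ ‖h - h'‖ * ‖P e‖ := by linarith [h3, h4 ▸ h3]
  have hPe : P e = P p - P p' := by rw [he, map_sub]
  rcases eq_or_lt_of_le (norm_nonneg (P e)) with hn0 | hn
  · rw [← hPe, ← hn0]
    positivity
  · have h7 : δt⁻¹ * ‖P e‖ ≤ ‖h - h'‖ := by nlinarith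
    rw [← hPe]
    calc ‖P e‖ = δt * (δt⁻¹ * ‖P e‖) := by field_simp
      _ ≤ δt * ‖h - h'‖ := by nlinarith

end Solver

theorem engine {dim : ℕ} {α : Type} [MeasurableSpace α] {μ : Measure α} [IsFiniteMeasure μ]
    {X : Type} [AddCommGroup X] [Module ℝ X] [FiniteDimensional ℝ X]
    (P : X →ₗ[ℝ] Lp ℝ 2 μ) (G : X →ₗ[ℝ] Lp (Euc dim) 2 μ)
    (hGnorm : ∀ φ : X, G φ = 0 → φ = 0)
    (χD : Lp ℝ 2 μ) (hKne : (KD μ P χD).Nonempty)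
    (A B : α → Euc dim →ₗ[ℝ] Euc dim)
    (hAmeas : ∀ ξ, Measurable fun x => A x ξ)
    (hBmeas : ∀ ξ, Measurable fun x => B x ξ)
    (d₁ d₂ : ℝ) (hd₁ : 0 < d₁)
    (hAsym : ∀ᵐ x ∂μ, ∀ ξ η, ⟪A x ξ, η⟫ = ⟪ξ, A x η⟫)
    (hBsym : ∀ᵐ x ∂μ, ∀ ξ η, ⟪B x ξ, η⟫ = ⟪ξ, B x η⟫)
    (hAell : ∀ᵐ x ∂μ, ∀ ξ, d₁ * ‖ξ‖ ^ 2 ≤ ⟪ξ, A x ξ⟫ ∧ ⟪ξ, A x ξ⟫ ≤ d₂ * ‖ξ‖ ^ 2)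
    (hBell : ∀ᵐ x ∂μ, ∀ ξ, d₁ * ‖ξ‖ ^ 2 ≤ ⟪ξ, B x ξ⟫ ∧ ⟪ξ, B x ξ⟫ ≤ d₂ * ‖ξ‖ ^ 2)
    (f g : ℝ → ℝ → ℝ) (M : ℝ) (hM : 0 < M)
    (hf : ∀ a b a' b', |f a b - f a' b'| ≤ M * (|a - a'| + |b - b'|))
    (hg : ∀ a b a' b', |g a b - g a' b'| ≤ M * (|a - a'| + |b - b'|))
    (δt : ℝ) (hδt : 0 < δt) (hδtM : δt < 1 / (2 * M))
    (pm : X) (qm : X) :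
    ∃! pq : X × X, IsOneStepSol μ P G χD A B f g δt pm qm pq.1 pq.2 := by
  classical
  -- the convex set
  set C : Set (Lp ℝ 2 μ) := Set.Ici χD with hC
  have hCc : IsClosed C := isClosed_Ici
  have hCv : Convex ℝ C := by
    intro u hu w hw a b ha hb hab
    rw [hC, Set.mem_Ici] at hu hw ⊢
    rw [← Lp.coeFn_le] at hu hw ⊢
    filter_upwards [hu, hw, Lp.coeFn_add (a • u) (b • w), Lp.coeFn_smul a u,
      Lp.coeFn_smul b w] with x e1 e2 e3 e4 e5
    rw [e3]
    simp only [Pi.add_apply]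
    rw [e4, e5]
    simp only [Pi.smul_apply, smul_eq_mul]
    have q1 := mul_le_mul_of_nonneg_left e1 ha
    have q2 := mul_le_mul_of_nonneg_left e2 hb
    have q3 : a * (χD x) + b * (χD x) = χD x := by
      have := congrArg (· * (χD x : ℝ)) hab
      simpa [add_mul] using this
    linarith [q1, q2, q3]
  have hKD : KD μ P χD = P ⁻¹' C := by
    ext φ
    change (∀ᵐ x ∂μ, χD x ≤ P φ x) ↔ χD ≤ P φ
    exact Lp.coeFn_le _ _
  have hne : (P ⁻¹' C).Nonempty := hKD ▸ hKne
  have hneU : (P ⁻¹' (Set.univ : Set (Lp ℝ 2 μ))).Nonempty := ⟨0, trivial⟩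
  -- operator bounds
  have hAbd : ∀ᵐ x ∂μ, ∀ ξ η, |⟪A x ξ, η⟫| ≤ d₂ * (‖ξ‖ * ‖η‖) := by
    filter_upwards [hAsym, hAell] with x h1 h2
    exact psd_op_bound (A x) d₂ h1 (fun ξ =>
      ⟨le_trans (mul_nonneg hd₁.le (sq_nonneg _)) (h2 ξ).1, (h2 ξ).2⟩)
  have hBbd : ∀ᵐ x ∂μ, ∀ ξ η, |⟪B x ξ, η⟫| ≤ d₂ * (‖ξ‖ * ‖η‖) := by
    filter_upwards [hBsym, hBell] with x h1 h2
    exact psd_op_bound (B x) d₂ h1 (fun ξ =>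
      ⟨le_trans (mul_nonneg hd₁.le (sq_nonneg _)) (h2 ξ).1, (h2 ξ).2⟩)
  -- superposition operators
  set Ff : Lp ℝ 2 μ → Lp ℝ 2 μ → Lp ℝ 2 μ :=
    fun u v => (lipComp_memLp f M hf u v).toLp _ with hFf
  set Fg : Lp ℝ 2 μ → Lp ℝ 2 μ → Lp ℝ 2 μ :=
    fun u v => (lipComp_memLp g M hg u v).toLp _ with hFg
  have hFfcoe : ∀ u v, (Ff u v : α → ℝ) =ᵐ[μ] fun x => f (u x) (v x) :=
    fun u v => (lipComp_memLp f M hf u v).coeFn_toLp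
  have hFgcoe : ∀ u v, (Fg u v : α → ℝ) =ᵐ[μ] fun x => g (u x) (v x) :=
    fun u v => (lipComp_memLp g M hg u v).coeFn_toLp
  -- solution operators
  have EP : ∀ h : Lp ℝ 2 μ, ∃! p, p ∈ P ⁻¹' C ∧ ∀ φ ∈ P ⁻¹' C,
      formA P G A δt p (p - φ) ≤ funcL P δt pm h (p - φ) :=
    fun h => scheme_solver P G hGnorm hAmeas hAbd hAsym hAell hd₁ hδt C hCc hCv hne pm h
  have EQ : ∀ h : Lp ℝ 2 μ, ∃! q, q ∈ P ⁻¹' (Set.univ : Set (Lp ℝ 2 μ)) ∧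
      ∀ φ ∈ P ⁻¹' (Set.univ : Set (Lp ℝ 2 μ)),
      formA P G B δt q (q - φ) ≤ funcL P δt qm h (q - φ) :=
    fun h => scheme_solver P G hGnorm hBmeas hBbd hBsym hBell hd₁ hδt Set.univ
      isClosed_univ convex_univ hneU qm h
  choose psol hpsolK hpsolVI using fun h => (EP h).exists
  choose qsol hqsolK hqsolVI using fun h => (EQ h).exists
  have hpuniq : ∀ (h : Lp ℝ 2 μ) (p' : X), (p' ∈ P ⁻¹' C ∧ ∀ φ ∈ P ⁻¹' C,
      formA P G A δt p' (p' - φ) ≤ funcL P δt pm h (p' - φ)) → p' = psol h :=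
    fun h p' hp' => (EP h).unique hp' ⟨hpsolK h, hpsolVI h⟩
  have hquniq : ∀ (h : Lp ℝ 2 μ) (q' : X), (q' ∈ P ⁻¹' (Set.univ : Set (Lp ℝ 2 μ)) ∧
      ∀ φ ∈ P ⁻¹' (Set.univ : Set (Lp ℝ 2 μ)),
      formA P G B δt q' (q' - φ) ≤ funcL P δt qm h (q' - φ)) → q' = qsol h :=
    fun h q' hq' => (EQ h).unique hq' ⟨hqsolK h, hqsolVI h⟩
  -- the contraction map
  set T : Lp ℝ 2 μ × Lp ℝ 2 μ → Lp ℝ 2 μ × Lp ℝ 2 μ :=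
    fun w => (P (psol (Ff w.1 w.2)), P (qsol (Fg w.1 w.2))) with hT
  have hTlip : ∀ w w', dist (T w) (T w') ≤ (2 * δt * M) * dist w w' := by
    intro w w'
    have h1 : ‖P (psol (Ff w.1 w.2)) - P (psol (Ff w'.1 w'.2))‖
        ≤ δt * ‖Ff w.1 w.2 - Ff w'.1 w'.2‖ :=
      scheme_contraction P G hAmeas hAbd hAsym hAell hd₁ hδt C pm _ _ _ _
        (hpsolK _) (hpsolVI _) (hpsolK _) (hpsolVI _)
    have h1' : ‖Ff w.1 w.2 - Ff w'.1 w'.2‖ ≤ M * (‖w.1 - w'.1‖ + ‖w.2 - w'.2‖) :=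
      lipComp_dist_le f M hf _ _ _ _ _ _
    have h2 : ‖P (qsol (Fg w.1 w.2)) - P (qsol (Fg w'.1 w'.2))‖
        ≤ δt * ‖Fg w.1 w.2 - Fg w'.1 w'.2‖ :=
      scheme_contraction P G hBmeas hBbd hBsym hBell hd₁ hδt Set.univ qm _ _ _ _
        (hqsolK _) (hqsolVI _) (hqsolK _) (hqsolVI _)
    have h2' : ‖Fg w.1 w.2 - Fg w'.1 w'.2‖ ≤ M * (‖w.1 - w'.1‖ + ‖w.2 - w'.2‖) :=
      lipComp_dist_le g M hg _ _ _ _ _ _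
    have hd1 : ‖w.1 - w'.1‖ ≤ dist w w' := by
      rw [← dist_eq_norm]
      exact (le_max_left _ _).trans (le_of_eq (Prod.dist_eq).symm)
    have hd2 : ‖w.2 - w'.2‖ ≤ dist w w' := by
      rw [← dist_eq_norm]
      exact (le_max_right _ _).trans (le_of_eq (Prod.dist_eq).symm)
    have hc1 : ‖P (psol (Ff w.1 w.2)) - P (psol (Ff w'.1 w'.2))‖
        ≤ 2 * δt * M * dist w w' := by
      calc ‖P (psol (Ff w.1 w.2)) - P (psol (Ff w'.1 w'.2))‖
          ≤ δt * ‖Ff w.1 w.2 - Ff w'.1 w'.2‖ := h1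
        _ ≤ δt * (M * (‖w.1 - w'.1‖ + ‖w.2 - w'.2‖)) :=
            mul_le_mul_of_nonneg_left h1' hδt.le
        _ ≤ δt * (M * (dist w w' + dist w w')) :=
            mul_le_mul_of_nonneg_left
              (mul_le_mul_of_nonneg_left (add_le_add hd1 hd2) hM.le) hδt.le
        _ = 2 * δt * M * dist w w' := by ring
    have hc2 : ‖P (qsol (Fg w.1 w.2)) - P (qsol (Fg w'.1 w'.2))‖
        ≤ 2 * δt * M * dist w w' := by
      calc ‖P (qsol (Fg w.1 w.2)) - P (qsol (Fg w'.1 w'.2))‖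
          ≤ δt * ‖Fg w.1 w.2 - Fg w'.1 w'.2‖ := h2
        _ ≤ δt * (M * (‖w.1 - w'.1‖ + ‖w.2 - w'.2‖)) :=
            mul_le_mul_of_nonneg_left h2' hδt.le
        _ ≤ δt * (M * (dist w w' + dist w w')) :=
            mul_le_mul_of_nonneg_left
              (mul_le_mul_of_nonneg_left (add_le_add hd1 hd2) hM.le) hδt.le
        _ = 2 * δt * M * dist w w' := by ring
    rw [Prod.dist_eq]
    apply max_le
    · rw [hT]
      dsimp only
      rw [dist_eq_norm]
      exact hc1
    · rw [hT]
      dsimp only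
      rw [dist_eq_norm]
      exact hc2
  set κ : NNReal := ⟨2 * δt * M, by positivity⟩ with hκ
  have hκ1 : κ < 1 := by
    rw [← NNReal.coe_lt_coe]
    have h2M : (0:ℝ) < 2 * M := by positivity
    rw [lt_div_iff₀ h2M] at hδtM
    push_cast
    simp only [hκ, NNReal.coe_mk]
    show 2 * δt * M < 1
    nlinarith
  have hcon : ContractingWith κ T :=
    ⟨hκ1, LipschitzWith.of_dist_le_mul hTlip⟩
  haveI : Nonempty (Lp ℝ 2 μ × Lp ℝ 2 μ) := ⟨(0, 0)⟩
  set z : Lp ℝ 2 μ × Lp ℝ 2 μ := ContractingWith.fixedPoint T hcon with hzdef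
  have hz : T z = z := hcon.fixedPoint_isFixedPt
  set ps : X := psol (Ff z.1 z.2) with hps
  set qs : X := qsol (Fg z.1 z.2) with hqs
  have hz1 : P ps = z.1 := congrArg Prod.fst hz
  have hz2 : P qs = z.2 := congrArg Prod.snd hz
  -- conversion identities
  have hcoePsub : ∀ r w : X, (P (r - w) : α → ℝ) =ᵐ[μ] fun x => P r x - P w x := by
    intro r w
    rw [map_sub]
    filter_upwards [Lp.coeFn_sub (P r) (P w)] with x e
    rw [e]
    simp
  have hcoeGsub : ∀ r w : X, (G (r - w) : α → Euc dim) =ᵐ[μ] fun x => G r x - G w x := by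
    intro r w
    rw [map_sub]
    filter_upwards [Lp.coeFn_sub (G r) (G w)] with x e
    rw [e]
    simp
  have hterm1 : ∀ (r s w : X), ∫ x, δt⁻¹ * (P r x - P s x) * (P r x - P w x) ∂μ
      = δt⁻¹ * ⟪P r, P (r - w)⟫ - δt⁻¹ * ⟪P s, P (r - w)⟫ := by
    intro r s w
    have hr : δt⁻¹ * ⟪P r, P (r - w)⟫ - δt⁻¹ * ⟪P s, P (r - w)⟫
        = δt⁻¹ * ⟪P r - P s, P (r - w)⟫ := by
      rw [inner_sub_left]; ring
    rw [hr, L2_inner_mul, ← integral_const_mul]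
    apply integral_congr_ae
    filter_upwards [Lp.coeFn_sub (P r) (P s), hcoePsub r w] with x e1 e2
    rw [e1, e2]
    simp only [Pi.sub_apply]
    ring
  have hterm1' : ∀ (r s w : X), ∫ x, δt⁻¹ * (P r x - P s x) * (P w x) ∂μ
      = δt⁻¹ * ⟪P r, P w⟫ - δt⁻¹ * ⟪P s, P w⟫ := by
    intro r s w
    have hr : δt⁻¹ * ⟪P r, P w⟫ - δt⁻¹ * ⟪P s, P w⟫ = δt⁻¹ * ⟪P r - P s, P w⟫ := by
      rw [inner_sub_left]; ring
    rw [hr, L2_inner_mul, ← integral_const_mul]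
    apply integral_congr_ae
    filter_upwards [Lp.coeFn_sub (P r) (P s)] with x e1
    rw [e1]
    simp only [Pi.sub_apply]
    ring
  have hterm2 : ∀ (p w : X), ∫ x, ⟪A x (G p x), G p x - G w x⟫ ∂μ
      = ∫ x, ⟪A x (G p x), G (p - w) x⟫ ∂μ := by
    intro p w
    apply integral_congr_ae
    filter_upwards [hcoeGsub p w] with x e
    rw [e]
  have hterm2B : ∀ (p w : X), ∫ x, ⟪B x (G p x), G p x - G w x⟫ ∂μ
      = ∫ x, ⟪B x (G p x), G (p - w) x⟫ ∂μ := by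
    intro p w
    apply integral_congr_ae
    filter_upwards [hcoeGsub p w] with x e
    rw [e]
  have hterm3 : ∀ (p q w : X) (h : Lp ℝ 2 μ),
      ((h : α → ℝ) =ᵐ[μ] fun x => f (P p x) (P q x)) →
      ∫ x, f (P p x) (P q x) * (P p x - P w x) ∂μ = ⟪h, P (p - w)⟫ := by
    intro p q w h hh
    rw [L2_inner_mul]
    apply integral_congr_ae
    filter_upwards [hh, hcoePsub p w] with x e1 e2
    rw [e1, e2]
  have hterm3' : ∀ (p q : X) (h : Lp ℝ 2 μ) (w : X),
      ((h : α → ℝ) =ᵐ[μ] fun x => g (P p x) (P q x)) →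
      ∫ x, g (P p x) (P q x) * (P w x) ∂μ = ⟪h, P w⟫ := by
    intro p q h w hh
    rw [L2_inner_mul]
    apply integral_congr_ae
    filter_upwards [hh] with x e1
    rw [e1]
  have hIneqIff : ∀ (p q φ : X) (h : Lp ℝ 2 μ),
      ((h : α → ℝ) =ᵐ[μ] fun x => f (P p x) (P q x)) →
      (((∫ x, δt⁻¹ * (P p x - P pm x) * (P p x - P φ x) ∂μ)
        + (∫ x, ⟪A x (G p x), G p x - G φ x⟫ ∂μ)
        ≤ ∫ x, f (P p x) (P q x) * (P p x - P φ x) ∂μ)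
      ↔ (formA P G A δt p (p - φ) ≤ funcL P δt pm h (p - φ))) := by
    intro p q φ h hh
    rw [hterm1 p pm φ, hterm2 p φ, hterm3 p q φ h hh]
    simp only [formA, funcL]
    constructor <;> intro <;> linarith
  have hEqIff : ∀ (p q ψ : X) (h : Lp ℝ 2 μ),
      ((h : α → ℝ) =ᵐ[μ] fun x => g (P p x) (P q x)) →
      (((∫ x, δt⁻¹ * (P q x - P qm x) * (P ψ x) ∂μ)
        + (∫ x, ⟪B x (G q x), G ψ x⟫ ∂μ)
        = ∫ x, g (P p x) (P q x) * (P ψ x) ∂μ)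
      ↔ (formA P G B δt q ψ = funcL P δt qm h ψ)) := by
    intro p q ψ h hh
    rw [hterm1' q qm ψ, hterm3' p q h ψ hh]
    simp only [formA, funcL]
    constructor <;> intro <;> linarith
  have hq_equiv : ∀ (q : X) (h : Lp ℝ 2 μ),
      (∀ ψ : X, formA P G B δt q ψ = funcL P δt qm h ψ) ↔
      (∀ φ ∈ P ⁻¹' (Set.univ : Set (Lp ℝ 2 μ)),
        formA P G B δt q (q - φ) ≤ funcL P δt qm h (q - φ)) := by
    intro q h
    constructor
    · intro he φ _
      exact le_of_eq (he _)
    · intro hv ψ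
      have h1 := hv (q - ψ) trivial
      rw [sub_sub_cancel] at h1
      have h2 := hv (q + ψ) trivial
      rw [sub_add_cancel_left, formA_neg_right P G hBsym, funcL_neg] at h2
      linarith
  -- the solution
  have hhs : (Ff z.1 z.2 : α → ℝ) =ᵐ[μ] fun x => f (P ps x) (P qs x) := by
    have hfun : (fun x => f (z.1 x) (z.2 x)) = fun x => f (P ps x) (P qs x) := by
      rw [hz1, hz2]
    have := hFfcoe z.1 z.2
    rw [hfun] at this
    exact this
  have hhs' : (Fg z.1 z.2 : α → ℝ) =ᵐ[μ] fun x => g (P ps x) (P qs x) := by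
    have hfun : (fun x => g (z.1 x) (z.2 x)) = fun x => g (P ps x) (P qs x) := by
      rw [hz1, hz2]
    have := hFgcoe z.1 z.2
    rw [hfun] at this
    exact this
  refine ⟨(ps, qs), ⟨?_, ?_, ?_⟩, ?_⟩
  · rw [hKD]
    exact hpsolK _
  · intro φ hφ
    rw [hKD] at hφ
    exact (hIneqIff ps qs φ (Ff z.1 z.2) hhs).2 (hpsolVI _ φ hφ)
  · intro ψ
    exact (hEqIff ps qs ψ (Fg z.1 z.2) hhs').2
      (((hq_equiv qs (Fg z.1 z.2)).2 (hqsolVI _)) ψ)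
  -- uniqueness
  · rintro ⟨p, q⟩ ⟨hpK, hpIneq, hqEq⟩
    have hh : (Ff (P p) (P q) : α → ℝ) =ᵐ[μ] fun x => f (P p x) (P q x) :=
      hFfcoe (P p) (P q)
    have hh' : (Fg (P p) (P q) : α → ℝ) =ᵐ[μ] fun x => g (P p x) (P q x) :=
      hFgcoe (P p) (P q)
    have hpK' : p ∈ P ⁻¹' C := by rw [← hKD]; exact hpK
    have hpVI : ∀ φ ∈ P ⁻¹' C,
        formA P G A δt p (p - φ) ≤ funcL P δt pm (Ff (P p) (P q)) (p - φ) := by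
      intro φ hφ
      exact (hIneqIff p q φ _ hh).1 (hpIneq φ (by rw [hKD]; exact hφ))
    have hp_eq : p = psol (Ff (P p) (P q)) := hpuniq _ p ⟨hpK', hpVI⟩
    have hqVI : ∀ φ ∈ P ⁻¹' (Set.univ : Set (Lp ℝ 2 μ)),
        formA P G B δt q (q - φ) ≤ funcL P δt qm (Fg (P p) (P q)) (q - φ) :=
      (hq_equiv q _).1 (fun ψ => (hEqIff p q ψ _ hh').1 (hqEq ψ))
    have hq_eq : q = qsol (Fg (P p) (P q)) := hquniq _ q ⟨trivial, hqVI⟩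
    have hTfix : T (P p, P q) = (P p, P q) := by
      rw [hT]
      dsimp only
      rw [← hp_eq, ← hq_eq]
    have huv : (P p, P q) = z := hcon.fixedPoint_unique hTfix
    have h1 : P p = z.1 := congrArg Prod.fst huv
    have h2 : P q = z.2 := congrArg Prod.snd huv
    have hpps : p = ps := by
      rw [hp_eq, hps, h1, h2]
    have hqqs : q = qs := by
      rw [hq_eq, hqs, h1, h2]
    rw [Prod.ext_iff]
    exact ⟨hpps, hqqs⟩

/-- **Existence and uniqueness for a single implicit time step.**
If `δt < 1/(2M)`, there is a unique pair `(p, q) ∈ K_D × X` which is a one-step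
solution of the gradient scheme from `(p⁻, q⁻)` with step `δt`. -/
theorem single_step_existence_uniqueness
    {dim : ℕ} (hdim : 1 ≤ dim)
    (Ω : Set (Euc dim)) (hΩo : IsOpen Ω) (hΩb : Bornology.IsBounded Ω)
    (hΩc : IsConnected Ω)
    {X : Type} [AddCommGroup X] [Module ℝ X] [FiniteDimensional ℝ X]
    (Pi : X →ₗ[ℝ] Lp ℝ 2 (volume.restrict Ω))
    (G : X →ₗ[ℝ] Lp (Euc dim) 2 (volume.restrict Ω))
    (hGnorm : ∀ φ : X, G φ = 0 → φ = 0)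
    (χD : Lp ℝ 2 (volume.restrict Ω))
    (hKne : (KD (volume.restrict Ω) Pi χD).Nonempty)
    (A B : Euc dim → Euc dim →ₗ[ℝ] Euc dim)
    (hAmeas : ∀ ξ, Measurable fun x => A x ξ)
    (hBmeas : ∀ ξ, Measurable fun x => B x ξ)
    (d₁ d₂ : ℝ) (hd₁ : 0 < d₁) (hd₁₂ : d₁ ≤ d₂)
    (hAsym : ∀ᵐ x ∂(volume.restrict Ω), ∀ ξ η, ⟪A x ξ, η⟫ = ⟪ξ, A x η⟫)
    (hBsym : ∀ᵐ x ∂(volume.restrict Ω), ∀ ξ η, ⟪B x ξ, η⟫ = ⟪ξ, B x η⟫)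
    (hAell : ∀ᵐ x ∂(volume.restrict Ω), ∀ ξ,
      d₁ * ‖ξ‖ ^ 2 ≤ ⟪ξ, A x ξ⟫ ∧ ⟪ξ, A x ξ⟫ ≤ d₂ * ‖ξ‖ ^ 2)
    (hBell : ∀ᵐ x ∂(volume.restrict Ω), ∀ ξ,
      d₁ * ‖ξ‖ ^ 2 ≤ ⟪ξ, B x ξ⟫ ∧ ⟪ξ, B x ξ⟫ ≤ d₂ * ‖ξ‖ ^ 2)
    (f g : ℝ → ℝ → ℝ) (M : ℝ) (hM : 0 < M)
    (hf : ∀ a b a' b', |f a b - f a' b'| ≤ M * (|a - a'| + |b - b'|))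
    (hg : ∀ a b a' b', |g a b - g a' b'| ≤ M * (|a - a'| + |b - b'|))
    (δt : ℝ) (hδt : 0 < δt) (hδtM : δt < 1 / (2 * M))
    (pm : X) (hpm : pm ∈ KD (volume.restrict Ω) Pi χD) (qm : X) :
    ∃! pq : X × X,
      IsOneStepSol (volume.restrict Ω) Pi G χD A B f g δt pm qm pq.1 pq.2 := by
  haveI : IsFiniteMeasure (volume.restrict Ω) :=
    ⟨by rw [Measure.restrict_apply_univ]; exact hΩb.measure_lt_top⟩
  exact engine Pi G hGnorm χD hKne A B hAmeas hBmeas d₁ d₂ hd₁ hAsym hBsym hAell hBell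
    f g M hM hf hg δt hδt hδtM pm qm
end
end

section
/- One-step error inequality for the obstacle component (key step of Theorem 3.3): Let [t₀, t₁] ⊂ ℝ with δt := t₁ − t₀ > 0. Assume 𝔸 is continuously differentiable on a neighbourhood of the closure of Ω, p̄ : Ω̄ × [t₀, t₁] → ℝ is continuous, continuously differentiable in t, twice continuously differentiable in x, q̄ : Ω̄ × [t₀, t₁] → ℝ is continuous, and ∂ₜp̄(x,t) − div(𝔸∇p̄)(x,t) − f(p̄(x,t), q̄(x,t)) ≥ 0 for all (x,t) ∈ Ω × (t₀, t₁). Assume ‖Πw‖_{L²(Ω)} ≤ C_D‖Gw‖_{L²(Ω)^d} for all w ∈ X. Denote by p̄ₐ, ∇p̄ₐ, Dₐ, fₐ the time averages δt⁻¹∫_{t₀}^{t₁}(·) dt over (t₀, t₁) of p̄, ∇p̄, div(𝔸∇p̄), f(p̄, q̄) respectively, and set ∂̄ := (p̄(·, t₁) − p̄(·, t₀))/δt. Let (p⁻, q⁻) ∈ K_D × X and let (p, q) ∈ K_D × X be a one-step solution of the gradient scheme from (p⁻, q⁻) with step δt. Let P⁻, P ∈ K_D, set ℛ := P − p and ℛ⁻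 := P⁻ − p⁻, and let E_t, E_g, W_A ≥ 0 be reals with ‖δt⁻¹(ΠP − ΠP⁻) − ∂̄‖_{L²(Ω)} ≤ E_t, ‖GP − ∇p̄ₐ‖_{L²(Ω)^d} ≤ E_g, and |∫_Ω (Πw·Dₐ + (𝔸∇p̄ₐ)·Gw) dx| ≤ W_A·‖Gw‖_{L²(Ω)^d} for all w ∈ X. Then ∫_Ω Πℛ·δt⁻¹(Πℛ − Πℛ⁻) dx + ∫_Ω (𝔸Gℛ)·Gℛ dx ≤ ∫_Ω Πℛ·(fₐ − f(Πp, Πq)) dx + (C_D·E_t + d₂·E_g + W_A)·‖Gℛ‖_{L²(Ω)^d} + ∫_Ω (χ_D − ΠP)·(fₐ + Dₐ − ∂̄) dx. -/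
open MeasureTheory RealInnerProductSpace

noncomputable section

/-! ### Auxiliary lemmas -/

theorem lipschitz_cont' {f : ℝ → ℝ → ℝ} {M : ℝ} (hM : 0 ≤ M)
    (hf : ∀ a b a' b', |f a b - f a' b'| ≤ M * (|a - a'| + |b - b'|)) :
    Continuous (fun z : ℝ × ℝ => f z.1 z.2) := by
  apply (LipschitzWith.of_dist_le_mul (K := ⟨2*M, by positivity⟩) ?_).continuous
  intro z w
  calc dist (f z.1 z.2) (f w.1 w.2) = |f z.1 z.2 - f w.1 w.2| := Real.dist_eq _ _
    _ ≤ M * (|z.1 - w.1| + |z.2 - w.2|) := hf _ _ _ _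
    _ ≤ M * (dist z w + dist z w) := by
        apply mul_le_mul_of_nonneg_left _ hM
        gcongr
        · rw [← Real.dist_eq, Prod.dist_eq]; exact le_max_left _ _
        · rw [← Real.dist_eq, Prod.dist_eq]; exact le_max_right _ _
    _ = (2*M) * dist z w := by ring

theorem slice_cont' {dim : ℕ} {E : Type*} [TopologicalSpace E] {S : Set (Euc dim)} {t₀ t₁ : ℝ}
    {F : ℝ → Euc dim → E}
    (hF : ContinuousOn (fun z : Euc dim × ℝ => F z.2 z.1) (S ×ˢ Set.Icc t₀ t₁))
    {x : Euc dim} (hx : x ∈ S) : ContinuousOn (fun s => F s x) (Set.Icc t₀ t₁) := by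
  have : (fun s => F s x) = (fun z : Euc dim × ℝ => F z.2 z.1) ∘ (fun s => (x, s)) := rfl
  rw [this]
  exact hF.comp ((continuous_const.prodMk continuous_id).continuousOn) (fun s hs => ⟨hx, hs⟩)

theorem xslice_cont' {dim : ℕ} {E : Type*} [TopologicalSpace E] {S : Set (Euc dim)} {t₀ t₁ : ℝ}
    {F : ℝ → Euc dim → E}
    (hF : ContinuousOn (fun z : Euc dim × ℝ => F z.2 z.1) (S ×ˢ Set.Icc t₀ t₁))
    {t : ℝ} (ht : t ∈ Set.Icc t₀ t₁) : ContinuousOn (fun x => F t x) S := by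
  have : (fun x => F t x) = (fun z : Euc dim × ℝ => F z.2 z.1) ∘ (fun x => (x, t)) := rfl
  rw [this]
  exact hF.comp ((continuous_id.prodMk continuous_const).continuousOn) (fun x hx => ⟨hx, ht⟩)

theorem cs_bound' {E : Type*} [NormedAddCommGroup E] [InnerProductSpace ℝ E]
    (A : E →ₗ[ℝ] E) (d₂ : ℝ) (hd₂ : 0 ≤ d₂)
    (hsym : ∀ ξ η, ⟪A ξ, η⟫ = ⟪ξ, A η⟫)
    (hell : ∀ ξ, 0 ≤ ⟪ξ, A ξ⟫ ∧ ⟪ξ, A ξ⟫ ≤ d₂ * ‖ξ‖ ^ 2)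
    (ξ η : E) : |⟪A ξ, η⟫| ≤ d₂ * (‖ξ‖ * ‖η‖) := by
  have hQ : ∀ ζ, 0 ≤ ⟪ζ, A ζ⟫ := fun ζ => (hell ζ).1
  have key : ∀ t : ℝ, 0 ≤ ⟪ξ, A ξ⟫ * (t * t) + (2 * ⟪A ξ, η⟫) * t + ⟪η, A η⟫ := by
    intro t
    have h0 := hQ (η + t • ξ)
    have e1 : ⟪η + t • ξ, A (η + t • ξ)⟫
        = ⟪ξ, A ξ⟫ * (t * t) + (2 * ⟪A ξ, η⟫) * t + ⟪η, A η⟫ := by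
      simp only [map_add, LinearMap.map_smul, inner_add_left, inner_add_right,
        real_inner_smul_left, real_inner_smul_right]
      have h2 : ⟪η, A ξ⟫ = ⟪A ξ, η⟫ := real_inner_comm _ _
      have h3 : ⟪ξ, A η⟫ = ⟪A ξ, η⟫ := (hsym ξ η).symm
      rw [h2, h3]; ring
    linarith [e1 ▸ h0]
  have hdisc := discrim_le_zero key
  have h2 : ⟪A ξ, η⟫ ^ 2 ≤ ⟪ξ, A ξ⟫ * ⟪η, A η⟫ := by
    rw [discrim] at hdisc; nlinarith
  have h3 : ⟪A ξ, η⟫ ^ 2 ≤ (d₂ * (‖ξ‖ * ‖η‖)) ^ 2 := by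
    have := (hell ξ).2; have := (hell η).2
    nlinarith [hQ ξ, hQ η, norm_nonneg ξ, norm_nonneg η, sq_nonneg (‖ξ‖*‖η‖)]
  have hd2 : 0 ≤ d₂ * (‖ξ‖ * ‖η‖) := by positivity
  calc |⟪A ξ, η⟫| = Real.sqrt (⟪A ξ, η⟫ ^ 2) := (Real.sqrt_sq_eq_abs _).symm
    _ ≤ Real.sqrt ((d₂ * (‖ξ‖ * ‖η‖)) ^ 2) := Real.sqrt_le_sqrt h3
    _ = d₂ * (‖ξ‖ * ‖η‖) := Real.sqrt_sq hd2

theorem integrable_inner2' {α : Type} [MeasurableSpace α] {μ : Measure α} {E : Type*}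
    [NormedAddCommGroup E] [InnerProductSpace ℝ E] {u v : α → E}
    (hu : MemLp u 2 μ) (hv : MemLp v 2 μ) :
    Integrable (fun x => ⟪u x, v x⟫) μ := by
  have h := L2.integrable_inner (𝕜 := ℝ) (hu.toLp u) (hv.toLp v)
  apply h.congr
  filter_upwards [hu.coeFn_toLp, hv.coeFn_toLp] with x h1 h2
  rw [h1, h2]

theorem abs_integral_inner_le' {α : Type} [MeasurableSpace α] {μ : Measure α} {E : Type*}
    [NormedAddCommGroup E] [InnerProductSpace ℝ E] {u v : α → E}
    (hu : MemLp u 2 μ) (hv : MemLp v 2 μ) :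
    |∫ x, ⟪u x, v x⟫ ∂μ| ≤ (eLpNorm u 2 μ).toReal * (eLpNorm v 2 μ).toReal := by
  have h1 : ∫ x, ⟪u x, v x⟫ ∂μ = ⟪hu.toLp u, hv.toLp v⟫ := by
    rw [L2.inner_def]
    apply integral_congr_ae
    filter_upwards [hu.coeFn_toLp, hv.coeFn_toLp] with x h1 h2
    rw [h1, h2]
  rw [h1, ← Lp.norm_toLp u hu, ← Lp.norm_toLp v hv]
  exact abs_real_inner_le_norm _ _

theorem integrable_mul2' {α : Type} [MeasurableSpace α] {μ : Measure α} {u v : α → ℝ}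
    (hu : MemLp u 2 μ) (hv : MemLp v 2 μ) :
    Integrable (fun x => u x * v x) μ :=
  (integrable_inner2' hu hv).congr (ae_of_all _ fun x => by
    simp only [RCLike.inner_apply', conj_trivial])

theorem abs_integral_mul_le' {α : Type} [MeasurableSpace α] {μ : Measure α} {u v : α → ℝ}
    (hu : MemLp u 2 μ) (hv : MemLp v 2 μ) :
    |∫ x, u x * v x ∂μ| ≤ (eLpNorm u 2 μ).toReal * (eLpNorm v 2 μ).toReal :=
  by
  have h := abs_integral_inner_le' hu hv
  have e : ∫ x, ⟪u x, v x⟫ ∂μ = ∫ x, u x * v x ∂μ := integral_congr_ae (ae_of_all _ fun x => by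
    simp only [RCLike.inner_apply', conj_trivial])
  rwa [e] at h

theorem meas_A' {dim : ℕ} (Ω U : Set (Euc dim)) (hΩo : IsOpen Ω) (hU : Ω ⊆ U)
    (A : Euc dim → Euc dim →ₗ[ℝ] Euc dim) (hA : ∀ ξ, ContinuousOn (fun x => A x ξ) U)
    {w : Euc dim → Euc dim} (hw : AEStronglyMeasurable w (volume.restrict Ω)) :
    AEStronglyMeasurable (fun x => A x (w x)) (volume.restrict Ω) := by
  have hrep : ∀ x, A x (w x) = ∑ i : Fin dim, (w x i) • A x (EuclideanSpace.single i (1:ℝ)) := by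
    intro x
    have h1 : w x = ∑ i, (w x i) • EuclideanSpace.single i (1:ℝ) := by
      ext j
      rw [WithLp.ofLp_sum, Finset.sum_apply]
      simp [EuclideanSpace.single_apply, PiLp.smul_apply]
    conv_lhs => rw [h1]
    rw [map_sum]
    exact Finset.sum_congr rfl fun i _ => by rw [LinearMap.map_smul]
  simp only [hrep]
  apply Finset.aestronglyMeasurable_fun_sum
  intro i _
  exact ((EuclideanSpace.proj (𝕜 := ℝ) i).continuous.comp_aestronglyMeasurable hw).smul
    (((hA _).mono hU).aestronglyMeasurable hΩo.measurableSet)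

theorem param_bound' {dim : ℕ} {E : Type*} [NormedAddCommGroup E] [NormedSpace ℝ E]
    (Ω : Set (Euc dim)) (hΩo : IsOpen Ω) (hΩb : Bornology.IsBounded Ω)
    (t₀ t₁ : ℝ) (h : t₀ ≤ t₁) (F : ℝ → Euc dim → E)
    (hF : ContinuousOn (fun z : Euc dim × ℝ => F z.2 z.1) (closure Ω ×ˢ Set.Icc t₀ t₁)) :
    AEStronglyMeasurable (fun x => ∫ s in t₀..t₁, F s x) (volume.restrict Ω) ∧
    ∃ K, ∀ x ∈ Ω, ‖∫ s in t₀..t₁, F s x‖ ≤ K := by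
  constructor
  · have hsub : Ω ×ˢ Set.Ioc t₀ t₁ ⊆ closure Ω ×ˢ Set.Icc t₀ t₁ :=
      Set.prod_mono subset_closure Set.Ioc_subset_Icc_self
    have hmeas : AEStronglyMeasurable (fun z : Euc dim × ℝ => F z.2 z.1)
        ((volume.restrict Ω).prod (volume.restrict (Set.Ioc t₀ t₁))) := by
      rw [Measure.prod_restrict, ← Measure.volume_eq_prod]
      exact (hF.mono hsub).aestronglyMeasurable (hΩo.measurableSet.prod measurableSet_Ioc)
    have := hmeas.integral_prod_right'
    simp only [intervalIntegral.integral_of_le h]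
    exact this
  · have hcpt : IsCompact (closure Ω ×ˢ Set.Icc t₀ t₁) :=
      hΩb.isCompact_closure.prod isCompact_Icc
    obtain ⟨K, hK⟩ := hcpt.exists_bound_of_continuousOn hF
    refine ⟨K * |t₁ - t₀|, fun x hx => ?_⟩
    apply intervalIntegral.norm_integral_le_of_norm_le_const
    intro s hs
    rw [Set.uIoc_of_le h] at hs
    exact hK (x, s) ⟨subset_closure hx, Set.Ioc_subset_Icc_self hs⟩

theorem memLp_on' {dim : ℕ} {E : Type*} [NormedAddCommGroup E] {Ω : Set (Euc dim)}
    (hΩo : IsOpen Ω) (hΩb : Bornology.IsBounded Ω) {g : Euc dim → E}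
    (hg : AEStronglyMeasurable g (volume.restrict Ω)) (K : ℝ)
    (hK : ∀ x ∈ Ω, ‖g x‖ ≤ K) : MemLp g 2 (volume.restrict Ω) := by
  haveI : IsFiniteMeasure (volume.restrict Ω) :=
    ⟨by rw [Measure.restrict_apply_univ]; exact hΩb.measure_lt_top⟩
  exact MemLp.of_bound hg K ((ae_restrict_iff' hΩo.measurableSet).mpr (ae_of_all _ hK))

theorem memLp_contOn' {dim : ℕ} {E : Type*} [NormedAddCommGroup E] {Ω : Set (Euc dim)}
    (hΩo : IsOpen Ω) (hΩb : Bornology.IsBounded Ω) {g : Euc dim → E}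
    (hg : ContinuousOn g (closure Ω)) : MemLp g 2 (volume.restrict Ω) := by
  obtain ⟨K, hK⟩ := hΩb.isCompact_closure.exists_bound_of_continuousOn hg
  exact memLp_on' hΩo hΩb
    ((hg.mono subset_closure).aestronglyMeasurable hΩo.measurableSet) K
    (fun x hx => hK x (subset_closure hx))

theorem intA' {dim : ℕ} {Ω U : Set (Euc dim)} (hΩo : IsOpen Ω) (hUΩ : Ω ⊆ U)
    (A : Euc dim → Euc dim →ₗ[ℝ] Euc dim) (hA : ∀ ξ, ContinuousOn (fun x => A x ξ) U)
    (d₂ : ℝ) (hd₂ : 0 ≤ d₂)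
    (hAsym : ∀ x ξ η, ⟪A x ξ, η⟫ = ⟪ξ, A x η⟫)
    (hAell : ∀ x ξ, 0 ≤ ⟪ξ, A x ξ⟫ ∧ ⟪ξ, A x ξ⟫ ≤ d₂ * ‖ξ‖ ^ 2)
    {u v : Euc dim → Euc dim} (hu : MemLp u 2 (volume.restrict Ω))
    (hv : MemLp v 2 (volume.restrict Ω)) :
    Integrable (fun x => ⟪A x (u x), v x⟫) (volume.restrict Ω) ∧
    |∫ x, ⟪A x (u x), v x⟫ ∂(volume.restrict Ω)|
      ≤ d₂ * ((eLpNorm u 2 (volume.restrict Ω)).toReal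
          * (eLpNorm v 2 (volume.restrict Ω)).toReal) := by
  have hb : ∀ x, |⟪A x (u x), v x⟫| ≤ d₂ * (‖u x‖ * ‖v x‖) := fun x =>
    cs_bound' (A x) d₂ hd₂ (hAsym x) (hAell x) _ _
  have hmeas : AEStronglyMeasurable (fun x => ⟪A x (u x), v x⟫) (volume.restrict Ω) :=
    (meas_A' Ω U hΩo hUΩ A hA hu.1).inner hv.1
  have hnint : Integrable (fun x => ‖u x‖ * ‖v x‖) (volume.restrict Ω) :=
    integrable_mul2' hu.norm hv.norm
  have hint : Integrable (fun x => ⟪A x (u x), v x⟫) (volume.restrict Ω) := by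
    apply Integrable.mono' (hnint.const_mul d₂) hmeas
    exact ae_of_all _ fun x => by simpa [Real.norm_eq_abs] using hb x
  refine ⟨hint, ?_⟩
  calc |∫ x, ⟪A x (u x), v x⟫ ∂(volume.restrict Ω)|
      ≤ ∫ x, |⟪A x (u x), v x⟫| ∂(volume.restrict Ω) := by
        simpa [Real.norm_eq_abs] using norm_integral_le_integral_norm
          (μ := volume.restrict Ω) (fun x => ⟪A x (u x), v x⟫)
    _ ≤ ∫ x, d₂ * (‖u x‖ * ‖v x‖) ∂(volume.restrict Ω) :=
        integral_mono_ae hint.abs (hnint.const_mul d₂) (ae_of_all _ hb)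
    _ = d₂ * ∫ x, ‖u x‖ * ‖v x‖ ∂(volume.restrict Ω) := integral_const_mul d₂ _
    _ ≤ d₂ * ((eLpNorm u 2 (volume.restrict Ω)).toReal
          * (eLpNorm v 2 (volume.restrict Ω)).toReal) := by
        apply mul_le_mul_of_nonneg_left _ hd₂
        calc ∫ x, ‖u x‖ * ‖v x‖ ∂(volume.restrict Ω)
            ≤ |∫ x, ‖u x‖ * ‖v x‖ ∂(volume.restrict Ω)| := le_abs_self _
          _ ≤ (eLpNorm (fun x => ‖u x‖) 2 (volume.restrict Ω)).toReal
              * (eLpNorm (fun x => ‖v x‖) 2 (volume.restrict Ω)).toReal :=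
              abs_integral_mul_le' hu.norm hv.norm
          _ = _ := by rw [eLpNorm_norm, eLpNorm_norm]

theorem time_sign' {dim : ℕ} {Ω : Set (Euc dim)}
    {t₀ t₁ : ℝ} (ht : t₀ < t₁)
    {pbar qbar dtp divA : ℝ → Euc dim → ℝ} {f : ℝ → ℝ → ℝ}
    (hpc : ContinuousOn (fun z : Euc dim × ℝ => pbar z.2 z.1) (closure Ω ×ˢ Set.Icc t₀ t₁))
    (hqc : ContinuousOn (fun z : Euc dim × ℝ => qbar z.2 z.1) (closure Ω ×ˢ Set.Icc t₀ t₁))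
    (hdt : ∀ x ∈ Ω, ∀ t ∈ Set.Icc t₀ t₁,
      HasDerivWithinAt (fun s => pbar s x) (dtp t x) (Set.Icc t₀ t₁) t)
    (hdtc : ContinuousOn (fun z : Euc dim × ℝ => dtp z.2 z.1) (closure Ω ×ˢ Set.Icc t₀ t₁))
    (hdivAc : ContinuousOn (fun z : Euc dim × ℝ => divA z.2 z.1) (closure Ω ×ˢ Set.Icc t₀ t₁))
    (hfc : Continuous (fun z : ℝ × ℝ => f z.1 z.2))
    (hPDE : ∀ x ∈ Ω, ∀ t ∈ Set.Ioo t₀ t₁,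
      0 ≤ dtp t x - divA t x - f (pbar t x) (qbar t x))
    (x : Euc dim) (hx : x ∈ Ω) :
    (∫ s in t₀..t₁, divA s x) + (∫ s in t₀..t₁, f (pbar s x) (qbar s x))
      ≤ pbar t₁ x - pbar t₀ x := by
  have hxc : x ∈ closure Ω := subset_closure hx
  have cont_p := slice_cont' hpc hxc
  have cont_dtp := slice_cont' hdtc hxc
  have cont_divA := slice_cont' hdivAc hxc
  have cont_f : ContinuousOn (fun s => f (pbar s x) (qbar s x)) (Set.Icc t₀ t₁) :=
    hfc.comp_continuousOn (f := fun s => (pbar s x, qbar s x)) ((slice_cont' hpc hxc).prodMk (slice_cont' hqc hxc))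
  have ii_dtp := cont_dtp.intervalIntegrable_of_Icc (μ := volume) ht.le
  have ii_divA := cont_divA.intervalIntegrable_of_Icc (μ := volume) ht.le
  have ii_f := cont_f.intervalIntegrable_of_Icc (μ := volume) ht.le
  have ftc : ∫ s in t₀..t₁, dtp s x = pbar t₁ x - pbar t₀ x := by
    apply intervalIntegral.integral_eq_sub_of_hasDeriv_right_of_le ht.le cont_p _ ii_dtp
    intro t htt
    refine (hdt x hx t (Set.Ioo_subset_Icc_self htt)).mono_of_mem_nhdsWithin ?_
    refine Filter.mem_of_superset (Ioc_mem_nhdsGT_of_mem ⟨le_rfl, htt.2⟩) ?_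
    exact fun s hs => ⟨le_trans htt.1.le hs.1.le, hs.2⟩
  have h0 : 0 ≤ ∫ s in t₀..t₁, (dtp s x - divA s x - f (pbar s x) (qbar s x)) := by
    apply intervalIntegral.integral_nonneg_of_ae_restrict ht.le
    have hends : ∀ᵐ s ∂(volume.restrict (Set.Icc t₀ t₁)), s ∉ ({t₀, t₁} : Set ℝ) := by
      apply ae_restrict_of_ae
      have : (volume : Measure ℝ) ({t₀, t₁} : Set ℝ) = 0 :=
        ((Set.finite_singleton t₁).insert t₀).measure_zero (volume : Measure ℝ)
      exact (measure_eq_zero_iff_ae_notMem (μ := (volume : Measure ℝ))).mp this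
    filter_upwards [hends, ae_restrict_mem measurableSet_Icc] with s hs1 hs2
    refine hPDE x hx s ⟨lt_of_le_of_ne hs2.1 ?_, lt_of_le_of_ne hs2.2 ?_⟩
    · exact fun h => hs1 (Or.inl h.symm)
    · exact fun h => hs1 (Or.inr h)
  rw [intervalIntegral.integral_sub (ii_dtp.sub ii_divA) ii_f,
    intervalIntegral.integral_sub ii_dtp ii_divA, ftc] at h0
  linarith
set_option maxHeartbeats 2000000 in
/-- **One-step error inequality for the obstacle component (key step of Theorem 3.3).** -/
theorem one_step_error_obstacle
    {dim : ℕ} (hdim : 1 ≤ dim)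
    (Ω : Set (Euc dim)) (hΩo : IsOpen Ω) (hΩb : Bornology.IsBounded Ω)
    (hΩc : IsConnected Ω)
    {X : Type} [AddCommGroup X] [Module ℝ X] [FiniteDimensional ℝ X]
    (Pi : X →ₗ[ℝ] Lp ℝ 2 (volume.restrict Ω))
    (G : X →ₗ[ℝ] Lp (Euc dim) 2 (volume.restrict Ω))
    (hGnorm : ∀ φ : X, G φ = 0 → φ = 0)
    (χD : Lp ℝ 2 (volume.restrict Ω))
    (A B : Euc dim → Euc dim →ₗ[ℝ] Euc dim)
    (hBmeas : ∀ ξ, Measurable fun x => B x ξ)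
    (d₁ d₂ : ℝ) (hd₁ : 0 < d₁) (hd₁₂ : d₁ ≤ d₂)
    (hAsym : ∀ x ξ η, ⟪A x ξ, η⟫ = ⟪ξ, A x η⟫)
    (hBsym : ∀ᵐ x ∂(volume.restrict Ω), ∀ ξ η, ⟪B x ξ, η⟫ = ⟪ξ, B x η⟫)
    (hAell : ∀ x ξ, d₁ * ‖ξ‖ ^ 2 ≤ ⟪ξ, A x ξ⟫ ∧ ⟪ξ, A x ξ⟫ ≤ d₂ * ‖ξ‖ ^ 2)
    (hBell : ∀ᵐ x ∂(volume.restrict Ω), ∀ ξ,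
      d₁ * ‖ξ‖ ^ 2 ≤ ⟪ξ, B x ξ⟫ ∧ ⟪ξ, B x ξ⟫ ≤ d₂ * ‖ξ‖ ^ 2)
    -- `𝔸` is continuously differentiable on an open neighbourhood `U` of `closure Ω`
    (U : Set (Euc dim)) (hUo : IsOpen U) (hUΩ : closure Ω ⊆ U)
    (hA1 : ∀ ξ, ContDiffOn ℝ 1 (fun x => A x ξ) U)
    (f g : ℝ → ℝ → ℝ) (M : ℝ) (hM : 0 < M)
    (hf : ∀ a b a' b', |f a b - f a' b'| ≤ M * (|a - a'| + |b - b'|))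
    (hg : ∀ a b a' b', |g a b - g a' b'| ≤ M * (|a - a'| + |b - b'|))
    -- coercivity constant
    (CD : ℝ) (hCD : ∀ w : X, ‖Pi w‖ ≤ CD * ‖G w‖)
    -- time interval
    (t₀ t₁ : ℝ) (ht : t₀ < t₁) (δt : ℝ) (hδt : δt = t₁ - t₀)
    -- exact solution data on `closure Ω × [t₀, t₁]`
    (pbar qbar : ℝ → Euc dim → ℝ)
    (gradp : ℝ → Euc dim → Euc dim)
    (dtp divA : ℝ → Euc dim → ℝ)
    (DA : ℝ → Euc dim → (Euc dim →L[ℝ] Euc dim))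
    (hpc : ContinuousOn (fun z : Euc dim × ℝ => pbar z.2 z.1)
      (closure Ω ×ˢ Set.Icc t₀ t₁))
    (hqc : ContinuousOn (fun z : Euc dim × ℝ => qbar z.2 z.1)
      (closure Ω ×ˢ Set.Icc t₀ t₁))
    -- `p̄` is continuously differentiable in time, with derivative `dtp`
    (hdt : ∀ x ∈ Ω, ∀ t ∈ Set.Icc t₀ t₁,
      HasDerivWithinAt (fun s => pbar s x) (dtp t x) (Set.Icc t₀ t₁) t)
    (hdtc : ContinuousOn (fun z : Euc dim × ℝ => dtp z.2 z.1)
      (closure Ω ×ˢ Set.Icc t₀ t₁))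
    -- `p̄` is twice continuously differentiable in space: spatial gradient `gradp`,
    -- and the vector field `x ↦ 𝔸(x)∇p̄(x,t)` is differentiable with derivative `DA`,
    -- whose trace is the divergence `divA = div(𝔸∇p̄)`
    (hgrad : ∀ t ∈ Set.Icc t₀ t₁, ∀ x ∈ Ω, HasGradientAt (fun y => pbar t y) (gradp t x) x)
    (hgradc : ContinuousOn (fun z : Euc dim × ℝ => gradp z.2 z.1)
      (closure Ω ×ˢ Set.Icc t₀ t₁))
    (hDA : ∀ t ∈ Set.Icc t₀ t₁, ∀ x ∈ Ω,
      HasFDerivAt (fun y => A y (gradp t y)) (DA t x) x)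
    (hdivA : ∀ t x, divA t x = LinearMap.trace ℝ (Euc dim) (DA t x : Euc dim →ₗ[ℝ] Euc dim))
    (hdivAc : ContinuousOn (fun z : Euc dim × ℝ => divA z.2 z.1)
      (closure Ω ×ˢ Set.Icc t₀ t₁))
    -- the PDE inequality `∂ₜp̄ − div(𝔸∇p̄) − f(p̄, q̄) ≥ 0` in `Ω × (t₀, t₁)`
    (hPDE : ∀ x ∈ Ω, ∀ t ∈ Set.Ioo t₀ t₁,
      0 ≤ dtp t x - divA t x - f (pbar t x) (qbar t x))
    -- discrete solution: one step of the gradient scheme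
    (pm qm p q : X) (hpm : pm ∈ KD (volume.restrict Ω) Pi χD)
    (hstep : IsOneStepSol (volume.restrict Ω) Pi G χD A B f g δt pm qm p q)
    -- interpolants
    (Pm P : X) (hPm : Pm ∈ KD (volume.restrict Ω) Pi χD)
    (hP : P ∈ KD (volume.restrict Ω) Pi χD)
    -- interpolation and limit-conformity error bounds
    (Et Eg WA : ℝ) (hEt0 : 0 ≤ Et) (hEg0 : 0 ≤ Eg) (hWA0 : 0 ≤ WA)
    (hEt : eLpNorm (fun x => δt⁻¹ * (Pi P x - Pi Pm x) - δt⁻¹ * (pbar t₁ x - pbar t₀ x))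
        2 (volume.restrict Ω) ≤ ENNReal.ofReal Et)
    (hEg : eLpNorm (fun x => G P x - δt⁻¹ • ∫ s in t₀..t₁, gradp s x)
        2 (volume.restrict Ω) ≤ ENNReal.ofReal Eg)
    (hWA : ∀ w : X,
      |∫ x, (Pi w x * (δt⁻¹ * ∫ s in t₀..t₁, divA s x)
          + ⟪A x (δt⁻¹ • ∫ s in t₀..t₁, gradp s x), G w x⟫) ∂(volume.restrict Ω)|
        ≤ WA * ‖G w‖) :
    (∫ x, Pi (P - p) x * (δt⁻¹ * (Pi (P - p) x - Pi (Pm - pm) x)) ∂(volume.restrict Ω))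
      + (∫ x, ⟪A x (G (P - p) x), G (P - p) x⟫ ∂(volume.restrict Ω))
    ≤ (∫ x, Pi (P - p) x
          * ((δt⁻¹ * ∫ s in t₀..t₁, f (pbar s x) (qbar s x)) - f (Pi p x) (Pi q x))
          ∂(volume.restrict Ω))
      + (CD * Et + d₂ * Eg + WA) * ‖G (P - p)‖
      + ∫ x, (χD x - Pi P x)
          * ((δt⁻¹ * ∫ s in t₀..t₁, f (pbar s x) (qbar s x))
              + (δt⁻¹ * ∫ s in t₀..t₁, divA s x)
              - δt⁻¹ * (pbar t₁ x - pbar t₀ x)) ∂(volume.restrict Ω) := by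
  haveI hfin : IsFiniteMeasure (volume.restrict Ω) :=
    ⟨by rw [Measure.restrict_apply_univ]; exact hΩb.measure_lt_top⟩
  have hδt0 : 0 < δt := by rw [hδt]; linarith
  have hd₂0 : 0 ≤ d₂ := le_trans hd₁.le hd₁₂
  have hfc : Continuous (fun z : ℝ × ℝ => f z.1 z.2) := lipschitz_cont' hM.le hf
  have hAell' : ∀ x ξ, 0 ≤ ⟪ξ, A x ξ⟫ ∧ ⟪ξ, A x ξ⟫ ≤ d₂ * ‖ξ‖ ^ 2 := fun x ξ =>
    ⟨le_trans (by positivity) (hAell x ξ).1, (hAell x ξ).2⟩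
  have hAcont : ∀ ξ, ContinuousOn (fun x => A x ξ) U := fun ξ => (hA1 ξ).continuousOn
  have hΩU : Ω ⊆ U := subset_closure.trans hUΩ
  have intA := fun {u v : Euc dim → Euc dim} (hu : MemLp u 2 (volume.restrict Ω))
      (hv : MemLp v 2 (volume.restrict Ω)) =>
    intA' hΩo hΩU A hAcont d₂ hd₂0 hAsym hAell' hu hv
  -- a.e. identification of coercions
  have eR : (⇑(Pi (P - p)) : Euc dim → ℝ) =ᵐ[volume.restrict Ω]
      fun x => Pi P x - Pi p x := by rw [map_sub]; exact Lp.coeFn_sub _ _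
  have eRm : (⇑(Pi (Pm - pm)) : Euc dim → ℝ) =ᵐ[volume.restrict Ω]
      fun x => Pi Pm x - Pi pm x := by rw [map_sub]; exact Lp.coeFn_sub _ _
  have eGR : (⇑(G (P - p)) : Euc dim → Euc dim) =ᵐ[volume.restrict Ω]
      fun x => G P x - G p x := by rw [map_sub]; exact Lp.coeFn_sub _ _
  -- basic membership facts
  have mr : MemLp (⇑(Pi (P - p))) 2 (volume.restrict Ω) := Lp.memLp _
  have mgr : MemLp (⇑(G (P - p))) 2 (volume.restrict Ω) := Lp.memLp _
  -- parametric integral facts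
  have pDiv := param_bound' Ω hΩo hΩb t₀ t₁ ht.le divA hdivAc
  have hFc2 : ContinuousOn (fun z : Euc dim × ℝ => f (pbar z.2 z.1) (qbar z.2 z.1))
      (closure Ω ×ˢ Set.Icc t₀ t₁) := hfc.comp_continuousOn (f := fun z : Euc dim × ℝ => (pbar z.2 z.1, qbar z.2 z.1)) (hpc.prodMk hqc)
  have pF := param_bound' Ω hΩo hΩb t₀ t₁ ht.le (fun s x => f (pbar s x) (qbar s x)) hFc2
  have pG := param_bound' Ω hΩo hΩb t₀ t₁ ht.le gradp hgradc
  -- membership of the time-averaged quantities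
  have mDa : MemLp (fun x => δt⁻¹ * ∫ s in t₀..t₁, divA s x) 2 (volume.restrict Ω) := by
    obtain ⟨K, hK⟩ := pDiv.2
    refine memLp_on' hΩo hΩb (pDiv.1.const_mul δt⁻¹) (|δt⁻¹| * K) (fun x hx => ?_)
    rw [norm_mul, Real.norm_eq_abs]
    exact mul_le_mul_of_nonneg_left (hK x hx) (abs_nonneg _)
  have mfa : MemLp (fun x => δt⁻¹ * ∫ s in t₀..t₁, f (pbar s x) (qbar s x)) 2
      (volume.restrict Ω) := by
    obtain ⟨K, hK⟩ := pF.2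
    refine memLp_on' hΩo hΩb (pF.1.const_mul δt⁻¹) (|δt⁻¹| * K) (fun x hx => ?_)
    rw [norm_mul, Real.norm_eq_abs]
    exact mul_le_mul_of_nonneg_left (hK x hx) (abs_nonneg _)
  have mna : MemLp (fun x => δt⁻¹ • ∫ s in t₀..t₁, gradp s x) 2 (volume.restrict Ω) := by
    obtain ⟨K, hK⟩ := pG.2
    refine memLp_on' hΩo hΩb (pG.1.const_smul δt⁻¹) (|δt⁻¹| * K) (fun x hx => ?_)
    rw [norm_smul, Real.norm_eq_abs]
    exact mul_le_mul_of_nonneg_left (hK x hx) (abs_nonneg _)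
  have mdbar : MemLp (fun x => δt⁻¹ * (pbar t₁ x - pbar t₀ x)) 2 (volume.restrict Ω) := by
    apply memLp_contOn' hΩo hΩb
    exact continuousOn_const.mul ((xslice_cont' hpc (Set.right_mem_Icc.mpr ht.le)).sub
      (xslice_cont' hpc (Set.left_mem_Icc.mpr ht.le)))
  have hmUt : MemLp (fun x => δt⁻¹ * (Pi P x - Pi Pm x)
      - δt⁻¹ * (pbar t₁ x - pbar t₀ x)) 2 (volume.restrict Ω) :=
    ⟨(((Lp.aestronglyMeasurable (Pi P)).sub
        (Lp.aestronglyMeasurable (Pi Pm))).const_mul δt⁻¹).sub mdbar.1,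
      lt_of_le_of_lt hEt ENNReal.ofReal_lt_top⟩
  have mug : MemLp (fun x => G P x - δt⁻¹ • ∫ s in t₀..t₁, gradp s x) 2
      (volume.restrict Ω) :=
    ⟨(Lp.aestronglyMeasurable (G P)).sub mna.1, lt_of_le_of_lt hEg ENNReal.ofReal_lt_top⟩
  have mc : MemLp (fun x => f (Pi p x) (Pi q x)) 2 (volume.restrict Ω) := by
    have haesm : AEStronglyMeasurable (fun x => f (Pi p x) (Pi q x)) (volume.restrict Ω) :=
      hfc.comp_aestronglyMeasurable ((Lp.aestronglyMeasurable (Pi p)).prodMk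
        (Lp.aestronglyMeasurable (Pi q)))
    have mbig : MemLp (fun x => |f 0 0| + M * (‖Pi p x‖ + ‖Pi q x‖)) 2 (volume.restrict Ω) :=
      by
        have e1 : MemLp (fun x => ‖Pi p x‖ + ‖Pi q x‖) 2 (volume.restrict Ω) :=
          ((Lp.memLp (Pi p)).norm).add ((Lp.memLp (Pi q)).norm)
        have e2 : MemLp (fun x => M * (‖Pi p x‖ + ‖Pi q x‖)) 2 (volume.restrict Ω) :=
          e1.const_mul M
        exact (memLp_const |f 0 0|).add e2
    refine MemLp.of_le mbig haesm (ae_of_all _ fun x => ?_)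
    have h1 := hf (Pi p x) (Pi q x) 0 0
    simp only [sub_zero] at h1
    have h2 : |f (Pi p x) (Pi q x)| ≤ |f 0 0| + M * (|Pi p x| + |Pi q x|) := by
      have := abs_sub_abs_le_abs_sub (f (Pi p x) (Pi q x)) (f 0 0)
      linarith
    rw [Real.norm_eq_abs]
    refine le_trans (le_trans h2 (le_of_eq ?_)) (le_abs_self _)
    rw [Real.norm_eq_abs, Real.norm_eq_abs]
  -- integrability of the six pieces
  have i1 : Integrable (fun x => Pi (P - p) x * (δt⁻¹ * (Pi P x - Pi Pm x)
      - δt⁻¹ * (pbar t₁ x - pbar t₀ x))) (volume.restrict Ω) := integrable_mul2' mr hmUt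
  have i2 : Integrable (fun x => ⟪A x (G P x - δt⁻¹ • ∫ s in t₀..t₁, gradp s x),
      G (P - p) x⟫) (volume.restrict Ω) := (intA mug mgr).1
  have i3 : Integrable (fun x => Pi (P - p) x * (δt⁻¹ * ∫ s in t₀..t₁, divA s x)
      + ⟪A x (δt⁻¹ • ∫ s in t₀..t₁, gradp s x), G (P - p) x⟫) (volume.restrict Ω) :=
    (integrable_mul2' mr mDa).add (intA mna mgr).1
  have i4 : Integrable (fun x => Pi (P - p) x * (δt⁻¹ * (pbar t₁ x - pbar t₀ x)
      - δt⁻¹ * (∫ s in t₀..t₁, divA s x)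
      - δt⁻¹ * (∫ s in t₀..t₁, f (pbar s x) (qbar s x)))) (volume.restrict Ω) :=
    integrable_mul2' mr ((mdbar.sub mDa).sub mfa)
  have i5 : Integrable (fun x => Pi (P - p) x
      * ((δt⁻¹ * ∫ s in t₀..t₁, f (pbar s x) (qbar s x)) - f (Pi p x) (Pi q x)))
      (volume.restrict Ω) := integrable_mul2' mr (mfa.sub mc)
  have i6a : Integrable (fun x => f (Pi p x) (Pi q x) * Pi (P - p) x)
      (volume.restrict Ω) := integrable_mul2' mc mr
  have i6b : Integrable (fun x => δt⁻¹ * (Pi p x - Pi pm x) * Pi (P - p) x)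
      (volume.restrict Ω) :=
    integrable_mul2' (((Lp.memLp (Pi p)).sub (Lp.memLp (Pi pm))).const_mul δt⁻¹) mr
  have i6c : Integrable (fun x => ⟪A x (G p x), G (P - p) x⟫) (volume.restrict Ω) :=
    (intA (Lp.memLp (G p)) mgr).1
  have i6 : Integrable (fun x => f (Pi p x) (Pi q x) * Pi (P - p) x
      - δt⁻¹ * (Pi p x - Pi pm x) * Pi (P - p) x
      - ⟪A x (G p x), G (P - p) x⟫) (volume.restrict Ω) := (i6a.sub i6b).sub i6c
  have if1 : Integrable (fun x => Pi (P - p) x * (δt⁻¹ * (Pi (P - p) x - Pi (Pm - pm) x)))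
      (volume.restrict Ω) :=
    integrable_mul2' mr (((Lp.memLp (Pi (P - p))).sub (Lp.memLp (Pi (Pm - pm)))).const_mul δt⁻¹)
  have if2 : Integrable (fun x => ⟪A x (G (P - p) x), G (P - p) x⟫) (volume.restrict Ω) :=
    (intA mgr mgr).1
  have s2 : Integrable (fun x => Pi (P - p) x * (δt⁻¹ * (Pi P x - Pi Pm x)
      - δt⁻¹ * (pbar t₁ x - pbar t₀ x))
      + ⟪A x (G P x - δt⁻¹ • ∫ s in t₀..t₁, gradp s x), G (P - p) x⟫) (volume.restrict Ω) := i1.add i2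
  have s3 : Integrable (fun x => Pi (P - p) x * (δt⁻¹ * (Pi P x - Pi Pm x)
      - δt⁻¹ * (pbar t₁ x - pbar t₀ x))
      + ⟪A x (G P x - δt⁻¹ • ∫ s in t₀..t₁, gradp s x), G (P - p) x⟫
      + (Pi (P - p) x * (δt⁻¹ * ∫ s in t₀..t₁, divA s x)
      + ⟪A x (δt⁻¹ • ∫ s in t₀..t₁, gradp s x), G (P - p) x⟫)) (volume.restrict Ω) := s2.add i3
  have s4 : Integrable (fun x => Pi (P - p) x * (δt⁻¹ * (Pi P x - Pi Pm x)
      - δt⁻¹ * (pbar t₁ x - pbar t₀ x))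
      + ⟪A x (G P x - δt⁻¹ • ∫ s in t₀..t₁, gradp s x), G (P - p) x⟫
      + (Pi (P - p) x * (δt⁻¹ * ∫ s in t₀..t₁, divA s x)
      + ⟪A x (δt⁻¹ • ∫ s in t₀..t₁, gradp s x), G (P - p) x⟫)
      + Pi (P - p) x * (δt⁻¹ * (pbar t₁ x - pbar t₀ x)
      - δt⁻¹ * (∫ s in t₀..t₁, divA s x)
      - δt⁻¹ * (∫ s in t₀..t₁, f (pbar s x) (qbar s x)))) (volume.restrict Ω) := s3.add i4
  have s5 : Integrable (fun x => Pi (P - p) x * (δt⁻¹ * (Pi P x - Pi Pm x)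
      - δt⁻¹ * (pbar t₁ x - pbar t₀ x))
      + ⟪A x (G P x - δt⁻¹ • ∫ s in t₀..t₁, gradp s x), G (P - p) x⟫
      + (Pi (P - p) x * (δt⁻¹ * ∫ s in t₀..t₁, divA s x)
      + ⟪A x (δt⁻¹ • ∫ s in t₀..t₁, gradp s x), G (P - p) x⟫)
      + Pi (P - p) x * (δt⁻¹ * (pbar t₁ x - pbar t₀ x)
      - δt⁻¹ * (∫ s in t₀..t₁, divA s x)
      - δt⁻¹ * (∫ s in t₀..t₁, f (pbar s x) (qbar s x)))
      + Pi (P - p) x * ((δt⁻¹ * ∫ s in t₀..t₁, f (pbar s x) (qbar s x)) - f (Pi p x) (Pi q x))) (volume.restrict Ω) := s4.add i5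
  have i6ab : Integrable (fun x => f (Pi p x) (Pi q x) * Pi (P - p) x
      - δt⁻¹ * (Pi p x - Pi pm x) * Pi (P - p) x) (volume.restrict Ω) := i6a.sub i6b
  -- the pointwise a.e. decomposition
  have key_id : ∀ᵐ x ∂(volume.restrict Ω),
      Pi (P - p) x * (δt⁻¹ * (Pi (P - p) x - Pi (Pm - pm) x))
        + ⟪A x (G (P - p) x), G (P - p) x⟫
      = Pi (P - p) x * (δt⁻¹ * (Pi P x - Pi Pm x) - δt⁻¹ * (pbar t₁ x - pbar t₀ x))
        + ⟪A x (G P x - δt⁻¹ • ∫ s in t₀..t₁, gradp s x), G (P - p) x⟫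
        + (Pi (P - p) x * (δt⁻¹ * ∫ s in t₀..t₁, divA s x)
            + ⟪A x (δt⁻¹ • ∫ s in t₀..t₁, gradp s x), G (P - p) x⟫)
        + Pi (P - p) x * (δt⁻¹ * (pbar t₁ x - pbar t₀ x)
            - δt⁻¹ * (∫ s in t₀..t₁, divA s x)
            - δt⁻¹ * (∫ s in t₀..t₁, f (pbar s x) (qbar s x)))
        + Pi (P - p) x * ((δt⁻¹ * ∫ s in t₀..t₁, f (pbar s x) (qbar s x))
            - f (Pi p x) (Pi q x))
        + (f (Pi p x) (Pi q x) * Pi (P - p) x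
            - δt⁻¹ * (Pi p x - Pi pm x) * Pi (P - p) x
            - ⟪A x (G p x), G (P - p) x⟫) := by
    filter_upwards [eR, eRm, eGR] with x h1 h2 h3
    rw [h1, h2, h3]
    have hA_lin : A x (G P x - G p x)
        = A x (G P x - δt⁻¹ • ∫ s in t₀..t₁, gradp s x)
          + A x (δt⁻¹ • ∫ s in t₀..t₁, gradp s x) - A x (G p x) := by
      rw [← map_add, ← map_sub, sub_add_cancel]
    rw [hA_lin, inner_sub_left, inner_add_left]
    ring
  -- the discrete variational inequality applied at `φ = P`
  have hB6 : ∫ x, (f (Pi p x) (Pi q x) * Pi (P - p) x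
      - δt⁻¹ * (Pi p x - Pi pm x) * Pi (P - p) x
      - ⟪A x (G p x), G (P - p) x⟫) ∂(volume.restrict Ω) ≤ 0 := by
    have hVI := hstep.2.1 P hP
    have e1 : ∫ x, δt⁻¹ * (Pi p x - Pi pm x) * (Pi p x - Pi P x) ∂(volume.restrict Ω)
        = - ∫ x, δt⁻¹ * (Pi p x - Pi pm x) * Pi (P - p) x ∂(volume.restrict Ω) := by
      rw [← integral_neg]
      apply integral_congr_ae
      filter_upwards [eR] with x hx
      rw [hx]; ring
    have e2 : ∫ x, ⟪A x (G p x), G p x - G P x⟫ ∂(volume.restrict Ω)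
        = - ∫ x, ⟪A x (G p x), G (P - p) x⟫ ∂(volume.restrict Ω) := by
      rw [← integral_neg]
      apply integral_congr_ae
      filter_upwards [eGR] with x hx
      rw [hx, show G p x - G P x = -(G P x - G p x) from (neg_sub _ _).symm, inner_neg_right]
    have e3 : ∫ x, f (Pi p x) (Pi q x) * (Pi p x - Pi P x) ∂(volume.restrict Ω)
        = - ∫ x, f (Pi p x) (Pi q x) * Pi (P - p) x ∂(volume.restrict Ω) := by
      rw [← integral_neg]
      apply integral_congr_ae
      filter_upwards [eR] with x hx
      rw [hx]; ring
    rw [e1, e2, e3] at hVI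
    rw [integral_sub i6ab i6c, integral_sub i6a i6b]
    linarith
  -- sign of the averaged PDE residual
  have hsign : ∀ᵐ x ∂(volume.restrict Ω),
      0 ≤ δt⁻¹ * (pbar t₁ x - pbar t₀ x) - δt⁻¹ * (∫ s in t₀..t₁, divA s x)
        - δt⁻¹ * (∫ s in t₀..t₁, f (pbar s x) (qbar s x)) := by
    refine (ae_restrict_iff' hΩo.measurableSet).mpr (ae_of_all _ fun x hx => ?_)
    have hts := time_sign' ht hpc hqc hdt hdtc hdivAc hfc hPDE x hx
    have h1 : 0 ≤ (pbar t₁ x - pbar t₀ x)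
        - ((∫ s in t₀..t₁, divA s x) + (∫ s in t₀..t₁, f (pbar s x) (qbar s x))) := by
      linarith
    nlinarith [mul_nonneg (inv_nonneg.mpr hδt0.le) h1]
  have hKp : ∀ᵐ x ∂(volume.restrict Ω), χD x ≤ Pi p x := hstep.1
  -- integrability of the target right-hand side integrand
  have ich : Integrable (fun x => (χD x - Pi P x)
      * ((δt⁻¹ * ∫ s in t₀..t₁, f (pbar s x) (qbar s x))
          + (δt⁻¹ * ∫ s in t₀..t₁, divA s x)
          - δt⁻¹ * (pbar t₁ x - pbar t₀ x))) (volume.restrict Ω) :=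
    integrable_mul2' ((Lp.memLp χD).sub (Lp.memLp (Pi P))) ((mfa.add mDa).sub mdbar)
  -- comparison of the obstacle term
  have hB4 : (∫ x, Pi (P - p) x * (δt⁻¹ * (pbar t₁ x - pbar t₀ x)
      - δt⁻¹ * (∫ s in t₀..t₁, divA s x)
      - δt⁻¹ * (∫ s in t₀..t₁, f (pbar s x) (qbar s x))) ∂(volume.restrict Ω))
      ≤ ∫ x, (χD x - Pi P x)
        * ((δt⁻¹ * ∫ s in t₀..t₁, f (pbar s x) (qbar s x))
            + (δt⁻¹ * ∫ s in t₀..t₁, divA s x)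
            - δt⁻¹ * (pbar t₁ x - pbar t₀ x)) ∂(volume.restrict Ω) := by
    apply integral_mono_ae i4 ich
    filter_upwards [hsign, hKp, eR] with x h1 h2 h3
    rw [h3]
    nlinarith [mul_nonneg (sub_nonneg.mpr h2) h1]
  -- norm identities
  have hnormPi : (eLpNorm (⇑(Pi (P - p))) 2 (volume.restrict Ω)).toReal = ‖Pi (P - p)‖ :=
    (Lp.norm_def _).symm
  have hnormG : (eLpNorm (⇑(G (P - p))) 2 (volume.restrict Ω)).toReal = ‖G (P - p)‖ :=
    (Lp.norm_def _).symm
  have hGnn : (0:ℝ) ≤ ‖G (P - p)‖ := norm_nonneg _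
  -- bound for the first piece
  have hB1 : (∫ x, Pi (P - p) x * (δt⁻¹ * (Pi P x - Pi Pm x)
      - δt⁻¹ * (pbar t₁ x - pbar t₀ x)) ∂(volume.restrict Ω)) ≤ CD * Et * ‖G (P - p)‖ := by
    have h1 := abs_integral_mul_le' mr hmUt
    have h2 : (eLpNorm (fun x => δt⁻¹ * (Pi P x - Pi Pm x)
        - δt⁻¹ * (pbar t₁ x - pbar t₀ x)) 2 (volume.restrict Ω)).toReal ≤ Et :=
      ENNReal.toReal_le_of_le_ofReal hEt0 hEt
    have h3 : ‖Pi (P - p)‖ ≤ CD * ‖G (P - p)‖ := hCD (P - p)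
    calc (∫ x, Pi (P - p) x * (δt⁻¹ * (Pi P x - Pi Pm x)
        - δt⁻¹ * (pbar t₁ x - pbar t₀ x)) ∂(volume.restrict Ω))
        ≤ |∫ x, Pi (P - p) x * (δt⁻¹ * (Pi P x - Pi Pm x)
          - δt⁻¹ * (pbar t₁ x - pbar t₀ x)) ∂(volume.restrict Ω)| := le_abs_self _
      _ ≤ (eLpNorm (⇑(Pi (P - p))) 2 (volume.restrict Ω)).toReal
          * (eLpNorm (fun x => δt⁻¹ * (Pi P x - Pi Pm x)
            - δt⁻¹ * (pbar t₁ x - pbar t₀ x)) 2 (volume.restrict Ω)).toReal := h1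
      _ ≤ (CD * ‖G (P - p)‖) * Et := by
          rw [hnormPi]
          exact mul_le_mul h3 h2 ENNReal.toReal_nonneg
            (le_trans (norm_nonneg _) h3)
      _ = CD * Et * ‖G (P - p)‖ := by ring
  -- bound for the second piece
  have hB2 : (∫ x, ⟪A x (G P x - δt⁻¹ • ∫ s in t₀..t₁, gradp s x), G (P - p) x⟫
      ∂(volume.restrict Ω)) ≤ d₂ * Eg * ‖G (P - p)‖ := by
    have h1 := (intA mug mgr).2
    have h2 : (eLpNorm (fun x => G P x - δt⁻¹ • ∫ s in t₀..t₁, gradp s x) 2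
        (volume.restrict Ω)).toReal ≤ Eg := ENNReal.toReal_le_of_le_ofReal hEg0 hEg
    calc (∫ x, ⟪A x (G P x - δt⁻¹ • ∫ s in t₀..t₁, gradp s x), G (P - p) x⟫
        ∂(volume.restrict Ω)) ≤ |∫ x, ⟪A x (G P x - δt⁻¹ • ∫ s in t₀..t₁, gradp s x),
          G (P - p) x⟫ ∂(volume.restrict Ω)| := le_abs_self _
      _ ≤ d₂ * ((eLpNorm (fun x => G P x - δt⁻¹ • ∫ s in t₀..t₁, gradp s x) 2
            (volume.restrict Ω)).toReal
          * (eLpNorm (⇑(G (P - p))) 2 (volume.restrict Ω)).toReal) := h1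
      _ ≤ d₂ * (Eg * ‖G (P - p)‖) := by
          apply mul_le_mul_of_nonneg_left _ hd₂0
          rw [hnormG]
          exact mul_le_mul_of_nonneg_right h2 hGnn
      _ = d₂ * Eg * ‖G (P - p)‖ := by ring
  -- bound for the third piece
  have hB3 : (∫ x, (Pi (P - p) x * (δt⁻¹ * ∫ s in t₀..t₁, divA s x)
      + ⟪A x (δt⁻¹ • ∫ s in t₀..t₁, gradp s x), G (P - p) x⟫) ∂(volume.restrict Ω))
      ≤ WA * ‖G (P - p)‖ := le_trans (le_abs_self _) (hWA (P - p))
  -- assemble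
  calc (∫ x, Pi (P - p) x * (δt⁻¹ * (Pi (P - p) x - Pi (Pm - pm) x)) ∂(volume.restrict Ω))
      + (∫ x, ⟪A x (G (P - p) x), G (P - p) x⟫ ∂(volume.restrict Ω))
      = ∫ x, (Pi (P - p) x * (δt⁻¹ * (Pi (P - p) x - Pi (Pm - pm) x))
          + ⟪A x (G (P - p) x), G (P - p) x⟫) ∂(volume.restrict Ω) :=
        (integral_add if1 if2).symm
    _ = ∫ x, (Pi (P - p) x * (δt⁻¹ * (Pi P x - Pi Pm x) - δt⁻¹ * (pbar t₁ x - pbar t₀ x))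
        + ⟪A x (G P x - δt⁻¹ • ∫ s in t₀..t₁, gradp s x), G (P - p) x⟫
        + (Pi (P - p) x * (δt⁻¹ * ∫ s in t₀..t₁, divA s x)
            + ⟪A x (δt⁻¹ • ∫ s in t₀..t₁, gradp s x), G (P - p) x⟫)
        + Pi (P - p) x * (δt⁻¹ * (pbar t₁ x - pbar t₀ x)
            - δt⁻¹ * (∫ s in t₀..t₁, divA s x)
            - δt⁻¹ * (∫ s in t₀..t₁, f (pbar s x) (qbar s x)))
        + Pi (P - p) x * ((δt⁻¹ * ∫ s in t₀..t₁, f (pbar s x) (qbar s x))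
            - f (Pi p x) (Pi q x))
        + (f (Pi p x) (Pi q x) * Pi (P - p) x
            - δt⁻¹ * (Pi p x - Pi pm x) * Pi (P - p) x
            - ⟪A x (G p x), G (P - p) x⟫)) ∂(volume.restrict Ω) := integral_congr_ae key_id
    _ = (∫ x, Pi (P - p) x * (δt⁻¹ * (Pi P x - Pi Pm x)
          - δt⁻¹ * (pbar t₁ x - pbar t₀ x)) ∂(volume.restrict Ω))
        + (∫ x, ⟪A x (G P x - δt⁻¹ • ∫ s in t₀..t₁, gradp s x), G (P - p) x⟫
          ∂(volume.restrict Ω))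
        + (∫ x, (Pi (P - p) x * (δt⁻¹ * ∫ s in t₀..t₁, divA s x)
            + ⟪A x (δt⁻¹ • ∫ s in t₀..t₁, gradp s x), G (P - p) x⟫) ∂(volume.restrict Ω))
        + (∫ x, Pi (P - p) x * (δt⁻¹ * (pbar t₁ x - pbar t₀ x)
            - δt⁻¹ * (∫ s in t₀..t₁, divA s x)
            - δt⁻¹ * (∫ s in t₀..t₁, f (pbar s x) (qbar s x))) ∂(volume.restrict Ω))
        + (∫ x, Pi (P - p) x * ((δt⁻¹ * ∫ s in t₀..t₁, f (pbar s x) (qbar s x))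
            - f (Pi p x) (Pi q x)) ∂(volume.restrict Ω))
        + (∫ x, (f (Pi p x) (Pi q x) * Pi (P - p) x
            - δt⁻¹ * (Pi p x - Pi pm x) * Pi (P - p) x
            - ⟪A x (G p x), G (P - p) x⟫) ∂(volume.restrict Ω)) := by
        rw [integral_add s5 i6, integral_add s4 i5, integral_add s3 i4,
          integral_add s2 i3, integral_add i1 i2]
    _ ≤ CD * Et * ‖G (P - p)‖ + d₂ * Eg * ‖G (P - p)‖ + WA * ‖G (P - p)‖
        + (∫ x, (χD x - Pi P x)
            * ((δt⁻¹ * ∫ s in t₀..t₁, f (pbar s x) (qbar s x))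
                + (δt⁻¹ * ∫ s in t₀..t₁, divA s x)
                - δt⁻¹ * (pbar t₁ x - pbar t₀ x)) ∂(volume.restrict Ω))
        + (∫ x, Pi (P - p) x * ((δt⁻¹ * ∫ s in t₀..t₁, f (pbar s x) (qbar s x))
            - f (Pi p x) (Pi q x)) ∂(volume.restrict Ω))
        + 0 :=
        add_le_add (add_le_add (add_le_add (add_le_add (add_le_add hB1 hB2) hB3) hB4)
          le_rfl) hB6
    _ = (∫ x, Pi (P - p) x
          * ((δt⁻¹ * ∫ s in t₀..t₁, f (pbar s x) (qbar s x)) - f (Pi p x) (Pi q x))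
          ∂(volume.restrict Ω))
        + (CD * Et + d₂ * Eg + WA) * ‖G (P - p)‖
        + ∫ x, (χD x - Pi P x)
            * ((δt⁻¹ * ∫ s in t₀..t₁, f (pbar s x) (qbar s x))
                + (δt⁻¹ * ∫ s in t₀..t₁, divA s x)
                - δt⁻¹ * (pbar t₁ x - pbar t₀ x)) ∂(volume.restrict Ω) := by ring
end
end
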